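/- arXiv:cs/0611018 — 9 statements merged into one kernel-verified Lean document; each statement's English description precedes it below -/
import Mathlib

section
/- Let Φ = ∀y₁…∀y_m ∃x₁…∃x_n φ where φ is a conjunction of Horn clauses. Then Φ is true if and only if every assignment f : Y → Bool mapping at most one universal variable to false has an extension to all variables satisfying φ. -/
lemma horn_unique_pos {α : Type*} {c : List (α × Bool)} (h : c.countP (fun l => l.2) ≤ 1)
    {l l' : α × Bool} (hl : l ∈ c) (hl' : l' ∈ c) (hb : l.2 = true) (hb' : l'.2 = true) :
    l = l' := by
  by_contra hne
  classical
  have h1 : l ∈ c.filter (fun l => l.2) := List.mem_filter.mpr ⟨hl, hb⟩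
  have h2 : l' ∈ c.filter (fun l => l.2) := List.mem_filter.mpr ⟨hl', hb'⟩
  have hcard : ({l, l'} : Finset _).card ≤ (c.filter (fun l => l.2)).toFinset.card := by
    apply Finset.card_le_card
    intro x hx
    simp only [Finset.mem_insert, Finset.mem_singleton] at hx
    rcases hx with rfl | rfl
    · exact List.mem_toFinset.mpr h1
    · exact List.mem_toFinset.mpr h2
  rw [Finset.card_insert_of_notMem (by simp [hne]), Finset.card_singleton] at hcard
  have h3 := List.toFinset_card_le (c.filter (fun l => l.2))
  rw [← List.countP_eq_length_filter] at h3
  omega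

/-- Let `Φ = ∀y₁…∀y_m ∃x₁…∃x_n φ` where `φ` is a conjunction of Horn clauses
over the variables `Y ⊕ X` (`Y` universal, `X` existential); a clause is a list
of literals `(v, b)` and is Horn when it has at most one positive literal.
Then `Φ` is true (every assignment on `Y` extends to a satisfying assignment
of `φ`) iff every assignment `f : Y → Bool` mapping at most one universal
variable to `false` has an extension to all variables satisfying `φ`. -/
theorem pi2_horn_truth_iff {Y X : Type*} [Fintype Y]
    (φ : List (List ((Y ⊕ X) × Bool)))
    (hHorn : ∀ c ∈ φ, c.countP (fun l => l.2) ≤ 1) :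
    (∀ f : Y → Bool, ∃ f' : Y ⊕ X → Bool,
        (∀ y, f' (Sum.inl y) = f y) ∧ ∀ c ∈ φ, ∃ l ∈ c, f' l.1 = l.2)
    ↔ (∀ f : Y → Bool,
        (Finset.univ.filter (fun y => f y = false)).card ≤ 1 →
        ∃ f' : Y ⊕ X → Bool,
          (∀ y, f' (Sum.inl y) = f y) ∧ ∀ c ∈ φ, ∃ l ∈ c, f' l.1 = l.2) := by
  classical
  constructor
  · intro H f _
    exact H f
  · intro H f
    set S : Finset Y := Finset.univ.filter (fun y => f y = false) with hS
    obtain ⟨g₀, hg₀f, hg₀⟩ := H (fun _ => true) (by simp)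
    choose g hgf hg using fun y : Y =>
      H (fun y' => decide (y' ≠ y)) (by
        have he : (Finset.univ.filter (fun y' => (decide (y' ≠ y)) = false)) = {y} := by
          ext y'; simp
        rw [he]; simp)
    set h : Y ⊕ X → Bool := fun v => g₀ v ⊓ S.inf (fun y => g y v) with hh
    have hfalse₀ : ∀ v, g₀ v = false → h v = false := by
      intro v hv; simp [hh, hv]
    have hfalse : ∀ v, ∀ y ∈ S, g y v = false → h v = false := by
      intro v y hy hv
      have hle : S.inf (fun y => g y v) ≤ g y v := Finset.inf_le hy
      rw [hv] at hle
      have : S.inf (fun y => g y v) = false := le_bot_iff.mp hle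
      simp [hh, this]
    have htrue : ∀ v, g₀ v = true → (∀ y ∈ S, g y v = true) → h v = true := by
      intro v h0 hy
      have : S.inf (fun y => g y v) = true := by
        rw [show (true : Bool) = ⊤ from rfl, eq_top_iff]
        exact Finset.le_inf (fun y hyS => by rw [hy y hyS]; exact le_rfl)
      simp [hh, h0, this]
    refine ⟨h, ?_, ?_⟩
    · intro y'
      by_cases hy' : f y' = false
      · rw [hy']
        apply hfalse _ y' (by simp [hS, hy'])
        rw [hgf]; simp
      · have hy'' : f y' = true := by revert hy'; cases f y' <;> simp
        rw [hy'']
        apply htrue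
        · exact hg₀f y'
        · intro y hyS
          rw [hgf]
          have : f y = false := by simpa [hS] using hyS
          have hne : y' ≠ y := fun he => by rw [he, this] at hy''; cases hy''
          simp [hne]
    · intro c hc
      by_cases hneg : ∃ l ∈ c, l.2 = false ∧ (g₀ l.1 = false ∨ ∃ y ∈ S, g y l.1 = false)
      · obtain ⟨l, hlc, hl2, hor⟩ := hneg
        refine ⟨l, hlc, ?_⟩
        rw [hl2]
        rcases hor with h0 | ⟨y, hyS, hyv⟩
        · exact hfalse₀ _ h0
        · exact hfalse _ y hyS hyv
      · push_neg at hneg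
        obtain ⟨l₀, hl₀c, hl₀⟩ := hg₀ c hc
        have hl₀2 : l₀.2 = true := by
          by_contra hb
          have hb' : l₀.2 = false := by revert hb; cases l₀.2 <;> simp
          exact (hneg l₀ hl₀c hb').1 (by rw [hl₀, hb'])
        refine ⟨l₀, hl₀c, ?_⟩
        rw [hl₀2]
        apply htrue
        · rw [hl₀, hl₀2]
        · intro y hyS
          obtain ⟨ly, hlyc, hly⟩ := hg y c hc
          have hly2 : ly.2 = true := by
            by_contra hb
            have hb' : ly.2 = false := by revert hb; cases ly.2 <;> simp
            exact (hneg ly hlyc hb').2 y hyS (by rw [hly, hb'])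
          have := horn_unique_pos (hHorn c hc) hlyc hl₀c hly2 hl₀2
          rw [← this, hly, hly2]
end

section
/- Let Φ = ∀y₁…∀y_m ∃x₁…∃x_n φ where φ is a conjunction of 2-clauses. Then Φ is true if and only if every assignment f : Y → Bool mapping at most two universal variables to false has an extension to all variables satisfying φ. -/
private def maj (a b c : Bool) : Bool := (a && b) || (a && c) || (b && c)

private lemma maj12 (x z : Bool) : maj x x z = x := by cases x <;> cases z <;> rfl
private lemma maj13 (x z : Bool) : maj x z x = x := by cases x <;> cases z <;> rfl
private lemma maj23 (x z : Bool) : maj z x x = x := by cases x <;> cases z <;> rfl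

/-- Let `Φ = ∀y₁…∀y_m ∃x₁…∃x_n φ` where `φ` is a conjunction of 2-clauses
over the variables `Y ⊕ X` (`Y` universal, `X` existential); a clause is a list
of literals `(v, b)` and is a 2-clause when it has exactly two literals.
Then `Φ` is true (every assignment on `Y` extends to a satisfying assignment
of `φ`) iff every assignment `f : Y → Bool` mapping at most two universal
variables to `false` has an extension to all variables satisfying `φ`. -/
theorem pi2_twosat_truth_iff {Y X : Type*} [Fintype Y]
    (φ : List (List ((Y ⊕ X) × Bool)))
    (h2 : ∀ c ∈ φ, c.length = 2) :
    (∀ f : Y → Bool, ∃ f' : Y ⊕ X → Bool,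
        (∀ y, f' (Sum.inl y) = f y) ∧ ∀ c ∈ φ, ∃ l ∈ c, f' l.1 = l.2)
    ↔ (∀ f : Y → Bool,
        (Finset.univ.filter (fun y => f y = false)).card ≤ 2 →
        ∃ f' : Y ⊕ X → Bool,
          (∀ y, f' (Sum.inl y) = f y) ∧ ∀ c ∈ φ, ∃ l ∈ c, f' l.1 = l.2) := by
  classical
  constructor
  · intro h f _
    exact h f
  · intro h f
    generalize hn : (Finset.univ.filter (fun y => f y = false)).card = n
    induction n using Nat.strong_induction_on generalizing f with
    | _ n ih =>
    by_cases hc : n ≤ 2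
    · exact h f (hn ▸ hc)
    push_neg at hc
    set S := Finset.univ.filter (fun y => f y = false) with hSdef
    -- pick three distinct false variables
    have h1pos : 0 < S.card := by omega
    obtain ⟨y1, hy1⟩ := Finset.card_pos.mp h1pos
    have h2pos : 0 < (S.erase y1).card := by
      rw [Finset.card_erase_of_mem hy1]; omega
    obtain ⟨y2, hy2⟩ := Finset.card_pos.mp h2pos
    have hy2S : y2 ∈ S := (Finset.mem_erase.mp hy2).2
    have hy21 : y2 ≠ y1 := (Finset.mem_erase.mp hy2).1
    have h3pos : 0 < ((S.erase y1).erase y2).card := by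
      rw [Finset.card_erase_of_mem hy2, Finset.card_erase_of_mem hy1]; omega
    obtain ⟨y3, hy3⟩ := Finset.card_pos.mp h3pos
    have hy32 : y3 ≠ y2 := (Finset.mem_erase.mp hy3).1
    have hy31 : y3 ≠ y1 := (Finset.mem_erase.mp (Finset.mem_erase.mp hy3).2).1
    have hy3S : y3 ∈ S := (Finset.mem_erase.mp (Finset.mem_erase.mp hy3).2).2
    have hf : ∀ t ∈ S, f t = false := by
      intro t ht; exact (Finset.mem_filter.mp ht).2
    -- flipping a false variable to true decreases the count
    have key : ∀ t ∈ S,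
        (Finset.univ.filter (fun y => Function.update f t true y = false)) = S.erase t := by
      intro t ht
      ext y
      simp only [Finset.mem_filter, Finset.mem_univ, true_and, Finset.mem_erase,
        Function.update_apply, hSdef]
      split_ifs with hyt
      · simp [hyt]
      · simp [hyt]
    have card_key : ∀ t ∈ S,
        (Finset.univ.filter (fun y => Function.update f t true y = false)).card = n - 1 := by
      intro t ht
      rw [key t ht, Finset.card_erase_of_mem ht, hn]
    have hlt : n - 1 < n := by omega
    obtain ⟨g1, hg1, hc1⟩ := ih (n - 1) hlt (Function.update f y1 true) (card_key y1 hy1)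
    obtain ⟨g2, hg2, hc2⟩ := ih (n - 1) hlt (Function.update f y2 true) (card_key y2 hy2S)
    obtain ⟨g3, hg3, hc3⟩ := ih (n - 1) hlt (Function.update f y3 true) (card_key y3 hy3S)
    refine ⟨fun v => maj (g1 v) (g2 v) (g3 v), ?_, ?_⟩
    · intro y
      simp only [hg1, hg2, hg3, Function.update_apply]
      rcases eq_or_ne y y1 with rfl | e1
      · rw [if_pos rfl, if_neg (Ne.symm hy21), if_neg (Ne.symm hy31), hf y hy1]
        rfl
      rcases eq_or_ne y y2 with rfl | e2
      · rw [if_neg e1, if_pos rfl, if_neg (Ne.symm hy32), hf y hy2S]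
        rfl
      rcases eq_or_ne y y3 with rfl | e3
      · rw [if_neg e1, if_neg e2, if_pos rfl, hf y hy3S]
        rfl
      · rw [if_neg e1, if_neg e2, if_neg e3]
        exact maj12 _ _
    · intro c hcφ
      obtain ⟨a, b, rfl⟩ := List.length_eq_two.mp (h2 c hcφ)
      have m1 : g1 a.1 = a.2 ∨ g1 b.1 = b.2 := by
        obtain ⟨l, hl, hv⟩ := hc1 _ hcφ
        rcases List.mem_pair.mp hl with rfl | rfl
        · exact Or.inl hv
        · exact Or.inr hv
      have m2 : g2 a.1 = a.2 ∨ g2 b.1 = b.2 := by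
        obtain ⟨l, hl, hv⟩ := hc2 _ hcφ
        rcases List.mem_pair.mp hl with rfl | rfl
        · exact Or.inl hv
        · exact Or.inr hv
      have m3 : g3 a.1 = a.2 ∨ g3 b.1 = b.2 := by
        obtain ⟨l, hl, hv⟩ := hc3 _ hcφ
        rcases List.mem_pair.mp hl with rfl | rfl
        · exact Or.inl hv
        · exact Or.inr hv
      have ha : a ∈ [a, b] := by simp
      have hb : b ∈ [a, b] := by simp
      rcases m1 with m1 | m1 <;> rcases m2 with m2 | m2 <;> rcases m3 with m3 | m3
      · exact ⟨a, ha, by rw [show (fun v => maj (g1 v) (g2 v) (g3 v)) a.1 = maj (g1 a.1) (g2 a.1) (g3 a.1) from rfl, m1, m2]; exact maj12 _ _⟩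
      · exact ⟨a, ha, by rw [show (fun v => maj (g1 v) (g2 v) (g3 v)) a.1 = maj (g1 a.1) (g2 a.1) (g3 a.1) from rfl, m1, m2]; exact maj12 _ _⟩
      · exact ⟨a, ha, by rw [show (fun v => maj (g1 v) (g2 v) (g3 v)) a.1 = maj (g1 a.1) (g2 a.1) (g3 a.1) from rfl, m1, m3]; exact maj13 _ _⟩
      · exact ⟨b, hb, by rw [show (fun v => maj (g1 v) (g2 v) (g3 v)) b.1 = maj (g1 b.1) (g2 b.1) (g3 b.1) from rfl, m2, m3]; exact maj23 _ _⟩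
      · exact ⟨a, ha, by rw [show (fun v => maj (g1 v) (g2 v) (g3 v)) a.1 = maj (g1 a.1) (g2 a.1) (g3 a.1) from rfl, m2, m3]; exact maj23 _ _⟩
      · exact ⟨b, hb, by rw [show (fun v => maj (g1 v) (g2 v) (g3 v)) b.1 = maj (g1 b.1) (g2 b.1) (g3 b.1) from rfl, m1, m3]; exact maj13 _ _⟩
      · exact ⟨b, hb, by rw [show (fun v => maj (g1 v) (g2 v) (g3 v)) b.1 = maj (g1 b.1) (g2 b.1) (g3 b.1) from rfl, m1, m2]; exact maj12 _ _⟩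
      · exact ⟨b, hb, by rw [show (fun v => maj (g1 v) (g2 v) (g3 v)) b.1 = maj (g1 b.1) (g2 b.1) (g3 b.1) from rfl, m1, m2]; exact maj12 _ _⟩
end

section
/- Let Φ = ∀y₁…∀y_m ∃x₁…∃x_n φ where φ is a conjunction of XOR equations of the form v₁ ⊕ ⋯ ⊕ v_k = c. Then Φ is true if and only if every assignment f : Y → Bool sending at most two universal variables to false has an extension satisfying φ. -/
private lemma xor3_foldr {α : Type*} (l : List α) (a b c : α → Bool) :
    (l.map (fun v => Bool.xor (a v) (Bool.xor (b v) (c v)))).foldr Bool.xor false =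
      Bool.xor ((l.map a).foldr Bool.xor false)
        (Bool.xor ((l.map b).foldr Bool.xor false) ((l.map c).foldr Bool.xor false)) := by
  induction l with
  | nil => rfl
  | cons h t ih =>
      simp only [List.map_cons, List.foldr_cons, ih]
      cases a h <;> cases b h <;> cases c h <;>
        cases (t.map a).foldr Bool.xor false <;>
        cases (t.map b).foldr Bool.xor false <;>
        cases (t.map c).foldr Bool.xor false <;> rfl

private lemma filter_update {Y : Type*} [Fintype Y] [DecidableEq Y] (f : Y → Bool) (a : Y) :
    (Finset.univ.filter (fun y => Function.update f a true y = false)) =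
      (Finset.univ.filter (fun y => f y = false)).erase a := by
  ext y
  by_cases h : y = a <;>
    simp [Finset.mem_erase, Function.update_apply, h]

/-- Let `Φ = ∀y₁…∀y_m ∃x₁…∃x_n φ` where `φ` is a conjunction of XOR equations
over the variables `Y ⊕ X` (`Y` universal, `X` existential); an equation is
given by a list of variables `e.1` and a constant `e.2`, and is satisfied by
`f'` when the XOR of the values of its variables equals the constant.
Then `Φ` is true (every assignment on `Y` extends to a satisfying assignment
of `φ`) iff every assignment `f : Y → Bool` mapping at most two universal
variables to `false` has an extension to all variables satisfying `φ`. -/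
theorem pi2_xor_truth_iff {Y X : Type*} [Fintype Y]
    (φ : List (List (Y ⊕ X) × Bool)) :
    (∀ f : Y → Bool, ∃ f' : Y ⊕ X → Bool,
        (∀ y, f' (Sum.inl y) = f y) ∧
        ∀ e ∈ φ, (e.1.map f').foldr Bool.xor false = e.2)
    ↔ (∀ f : Y → Bool,
        (Finset.univ.filter (fun y => f y = false)).card ≤ 2 →
        ∃ f' : Y ⊕ X → Bool,
          (∀ y, f' (Sum.inl y) = f y) ∧
          ∀ e ∈ φ, (e.1.map f').foldr Bool.xor false = e.2) := by
  classical
  constructor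
  · intro h f _
    exact h f
  · intro h
    suffices H : ∀ n (f : Y → Bool),
        (Finset.univ.filter (fun y => f y = false)).card ≤ n →
        ∃ f' : Y ⊕ X → Bool,
          (∀ y, f' (Sum.inl y) = f y) ∧
          ∀ e ∈ φ, (e.1.map f').foldr Bool.xor false = e.2 by
      intro f; exact H _ f le_rfl
    intro n
    induction n with
    | zero => intro f hf; exact h f (hf.trans (by norm_num))
    | succ n ih =>
        intro f hf
        by_cases hc : (Finset.univ.filter (fun y => f y = false)).card ≤ 2
        · exact h f hc
        · push_neg at hc
          set S := Finset.univ.filter (fun y => f y = false) with hS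
          obtain ⟨y₁, hy₁, y₂, hy₂, hne⟩ := Finset.one_lt_card.mp (by omega : 1 < S.card)
          have hcard : S.card ≤ n + 1 := hf
          set f₁ := Function.update f y₁ true with hf₁
          set f₂ := Function.update f y₂ true with hf₂
          set f₁₂ := Function.update f₁ y₂ true with hf₁₂
          have h1 : (Finset.univ.filter (fun y => f₁ y = false)).card ≤ n := by
            rw [hf₁, filter_update, ← hS]
            have := Finset.card_erase_of_mem hy₁
            omega
          have h2 : (Finset.univ.filter (fun y => f₂ y = false)).card ≤ n := by
            rw [hf₂, filter_update, ← hS]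
            have := Finset.card_erase_of_mem hy₂
            omega
          have h12 : (Finset.univ.filter (fun y => f₁₂ y = false)).card ≤ n := by
            rw [hf₁₂, filter_update, hf₁, filter_update, ← hS]
            have e1 := Finset.card_erase_of_mem hy₁
            have : Finset.card ((S.erase y₁).erase y₂) ≤ Finset.card (S.erase y₁) :=
              Finset.card_le_card (Finset.erase_subset _ _)
            omega
          obtain ⟨g₁, hg₁, hg₁φ⟩ := ih f₁ h1
          obtain ⟨g₂, hg₂, hg₂φ⟩ := ih f₂ h2
          obtain ⟨g₃, hg₃, hg₃φ⟩ := ih f₁₂ h12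
          refine ⟨fun v => Bool.xor (g₁ v) (Bool.xor (g₂ v) (g₃ v)), ?_, ?_⟩
          · intro y
            simp only [hg₁ y, hg₂ y, hg₃ y]
            by_cases e1 : y = y₁
            · subst e1
              have hfy : f y = false := by simpa [hS] using hy₁
              simp [hf₁, hf₂, hf₁₂, Function.update_apply, hne, hfy]
            · by_cases e2 : y = y₂
              · subst e2
                have hfy : f y = false := by simpa [hS] using hy₂
                simp [hf₁, hf₂, hf₁₂, Function.update_apply, e1, hfy]
              · simp only [hf₁, hf₂, hf₁₂, Function.update_apply, if_neg e1, if_neg e2]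
                cases f y <;> rfl
          · intro e he
            rw [xor3_foldr, hg₁φ e he, hg₂φ e he, hg₃φ e he]
            cases e.2 <;> rfl
end

section
/- (Geiger / Bodnarchuk et al.) For a finite constraint language Γ over a finite domain D, a relation R is pp-definable from Γ if and only if every polymorphism of Γ is a polymorphism of R: ⟨Γ⟩ = Inv(Pol(Γ)). -/
/-- An operation `f : D^m → D` is a polymorphism of a relation `R ⊆ D^k` if
applying `f` coordinate-wise to any `m` tuples of `R` yields a tuple of `R`. -/
def IsPolymorphism {D : Type*} {m k : ℕ} (f : (Fin m → D) → D)
    (R : Set (Fin k → D)) : Prop :=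
  ∀ ts : Fin m → Fin k → D, (∀ i, ts i ∈ R) → (fun j => f (fun i => ts i j)) ∈ R

/-- An atom of a pp-definition of a `k`-ary relation using `m` existentially
quantified variables: either a constraint `S(w₁,…,w_l)` on some of the
variables (which range over `Fin k ⊕ Fin m`), or an equality `u = v`. -/
inductive Atom (D : Type*) (k m : ℕ) where
  | rel (l : ℕ) (S : Set (Fin l → D)) (vars : Fin l → Fin k ⊕ Fin m)
  | eq (u v : Fin k ⊕ Fin m)

/-- All relations occurring in the atom belong to the constraint language `Γ`. -/
def Atom.OverLang {D : Type*} {k m : ℕ} (Γ : Set ((l : ℕ) × Set (Fin l → D))) :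
    Atom D k m → Prop
  | .rel l S _ => (⟨l, S⟩ : (l : ℕ) × Set (Fin l → D)) ∈ Γ
  | .eq _ _ => True

/-- Satisfaction of an atom under the assignment `a` to the free variables and
`b` to the existentially quantified variables. -/
def Atom.Sat {D : Type*} {k m : ℕ} (A : Atom D k m) (a : Fin k → D)
    (b : Fin m → D) : Prop :=
  match A with
  | .rel _ S vars => (fun i => Sum.elim a b (vars i)) ∈ S
  | .eq u v => Sum.elim a b u = Sum.elim a b v

/-- `R` is pp-definable from `Γ`: `R(v₁,…,v_k) ≡ ∃x₁…∃x_m 𝒞` where `𝒞` is a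
finite conjunction of constraints over relations of `Γ` and equalities. -/
def ppDefinable {D : Type*} (Γ : Set ((l : ℕ) × Set (Fin l → D))) {k : ℕ}
    (R : Set (Fin k → D)) : Prop :=
  ∃ (m : ℕ) (C : List (Atom D k m)),
    (∀ A ∈ C, Atom.OverLang Γ A) ∧
    R = {a | ∃ b : Fin m → D, ∀ A ∈ C, A.Sat a b}

/-- (Geiger / Bodnarchuk et al.) For a finite constraint language `Γ` over a
finite domain `D`, a relation `R` is pp-definable from `Γ` if and only if every
polymorphism of `Γ` is a polymorphism of `R`: `⟨Γ⟩ = Inv(Pol(Γ))`. -/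
theorem ppDefinable_iff_preserved {D : Type*} [Fintype D]
    (Γ : Set ((l : ℕ) × Set (Fin l → D))) (hΓ : Γ.Finite)
    {k : ℕ} (R : Set (Fin k → D)) :
    ppDefinable Γ R ↔
      ∀ (n : ℕ) (f : (Fin n → D) → D),
        (∀ S ∈ Γ, IsPolymorphism f S.2) → IsPolymorphism f R := by
  classical
  constructor
  · -- easy direction: pp-definable relations are preserved by polymorphisms of Γ
    rintro ⟨m, C, hC, rfl⟩ n f hf ts hts
    choose b hb using hts
    refine ⟨fun j => f (fun i => b i j), ?_⟩
    intro A hA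
    have key : ∀ w : Fin k ⊕ Fin m,
        Sum.elim (fun j => f (fun i => ts i j)) (fun j => f (fun i => b i j)) w
          = f (fun i => Sum.elim (ts i) (b i) w) := by
      rintro (u | v) <;> rfl
    cases A with
    | rel l S vars =>
      have hpol := hf ⟨l, S⟩ (hC _ hA)
      have := hpol (fun i p => Sum.elim (ts i) (b i) (vars p))
        (fun i => hb i _ hA)
      simpa [Atom.Sat, key] using this
    | eq u v =>
      have h := fun i => hb i _ hA
      simp only [Atom.Sat] at h ⊢
      rw [key u, key v]
      exact congrArg f (funext fun i => h i)
  · -- hard direction (Geiger)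
    intro H
    haveI : Fintype R := Fintype.ofFinite R
    set N := Fintype.card R with hN
    let e : R ≃ Fin N := Fintype.equivFin R
    let t : Fin N → (Fin k → D) := fun i => (e.symm i : Fin k → D)
    have ht : ∀ i, t i ∈ R := fun i => (e.symm i).2
    let V := Fin N → D
    let ev : V ≃ Fin (Fintype.card V) := Fintype.equivFin V
    set M := Fintype.card V with hM
    let c : Fin k → V := fun j => fun i => t i j
    let eqAtoms : List (Atom D k M) :=
      (List.finRange k).map (fun j => Atom.eq (.inl j) (.inr (ev (c j))))
    let relAtoms : List (Atom D k M) :=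
      hΓ.toFinset.toList.flatMap (fun S =>
        (((Finset.univ : Finset (Fin N → Fin S.1 → D)).filter
            (fun ts => ∀ i, ts i ∈ S.2)).toList).map
          (fun ts => Atom.rel S.1 S.2 (fun p => .inr (ev (fun i => ts i p)))))
    refine ⟨M, eqAtoms ++ relAtoms, ?_, ?_⟩
    · intro A hA
      rcases List.mem_append.mp hA with h | h
      · rcases List.mem_map.mp h with ⟨j, _, rfl⟩
        trivial
      · rcases List.mem_flatMap.mp h with ⟨S, hS, h2⟩
        rcases List.mem_map.mp h2 with ⟨ts, _, rfl⟩
        have : S ∈ Γ := hΓ.mem_toFinset.mp (Finset.mem_toList.mp hS)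
        simpa [Atom.OverLang] using this
    · ext a
      constructor
      · -- R ⊆ defined set: use the projection polymorphism
        intro ha
        let i₀ : Fin N := e ⟨a, ha⟩
        refine ⟨fun x => (ev.symm x) i₀, ?_⟩
        intro A hA
        rcases List.mem_append.mp hA with h | h
        · rcases List.mem_map.mp h with ⟨j, _, rfl⟩
          simp only [Atom.Sat, Sum.elim_inl, Sum.elim_inr, Equiv.symm_apply_apply]
          show a j = c j i₀
          simp only [c, t, i₀, Equiv.symm_apply_apply]
        · rcases List.mem_flatMap.mp h with ⟨S, hS, h2⟩
          rcases List.mem_map.mp h2 with ⟨ts, hts, rfl⟩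
          have hrows : ∀ i, ts i ∈ S.2 :=
            (Finset.mem_filter.mp (Finset.mem_toList.mp hts)).2
          simp only [Atom.Sat, Sum.elim_inr, Equiv.symm_apply_apply]
          exact hrows i₀
      · -- defined set ⊆ R
        rintro ⟨b, hb⟩
        let f : V → D := fun v => b (ev v)
        have hf : ∀ S ∈ Γ, IsPolymorphism f S.2 := by
          intro S hS ts hts
          have hmem : Atom.rel S.1 S.2 (fun p => .inr (ev (fun i => ts i p)))
              ∈ eqAtoms ++ relAtoms := by
            refine List.mem_append.mpr (Or.inr ?_)
            refine List.mem_flatMap.mpr ⟨S, Finset.mem_toList.mpr (hΓ.mem_toFinset.mpr hS), ?_⟩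
            exact List.mem_map.mpr ⟨ts,
              Finset.mem_toList.mpr (Finset.mem_filter.mpr ⟨Finset.mem_univ _, hts⟩), rfl⟩
          have := hb _ hmem
          simpa [Atom.Sat, f] using this
        have hpolR : IsPolymorphism f R := H N f hf
        have := hpolR t ht
        have heq : ∀ j, a j = f (fun i => t i j) := by
          intro j
          have hmem : Atom.eq (Sum.inl j : Fin k ⊕ Fin M) (.inr (ev (c j)))
              ∈ eqAtoms ++ relAtoms := by
            refine List.mem_append.mpr (Or.inl ?_)
            exact List.mem_map.mpr ⟨j, List.mem_finRange j, rfl⟩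
          have := hb _ hmem
          simpa [Atom.Sat, f, c] using this
        have : a = fun j => f (fun i => t i j) := funext heq
        rw [this]
        exact hpolR t ht
end

section
/- (Jeavons) Let Γ, Γ' be finite constraint languages over a finite domain. If Pol(Γ) ⊆ Pol(Γ'), then every relation of Γ' is pp-definable from Γ, i.e., Γ' ⊆ ⟨Γ⟩. -/
/-! Enumerate `R` as `r₁, …, rₙ` and pp-define it by the indicator problem of `Γ` on `D^n`:
one existential variable `x_g` for every `g ∈ D^n`, a constraint `S(x_{g₁}, …, x_{g_l})`
whenever `g₁, …, g_l` are the columns of `n` tuples of a relation `S ∈ Γ`, and `v_j = x_{c_j}`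
for the columns `c_j` of `r`. The solutions `x` are exactly the `n`-ary polymorphisms of `Γ`,
so the defined relation is `{F(c₁, …, c_k) | F ∈ Pol(Γ)}`. It contains every `rᵢ` (take the
`i`-th projection) and is contained in `R` because `Pol(Γ) ⊆ Pol(R)`. -/

section IndicatorProblem

open Finset

variable {D : Type*}

lemma isPolymorphism_eval {n k : ℕ} (i : Fin n) (R : Set (Fin k → D)) :
    IsPolymorphism (fun g : Fin n → D => g i) R :=
  fun _ hts => hts i

lemma eq_setOf_exists_polymorphism_apply_columns {n k : ℕ}
    (Γ : Set ((l : ℕ) × Set (Fin l → D))) {R : Set (Fin k → D)} {r : Fin n → Fin k → D}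
    (hr : Set.range r = R)
    (hPol : ∀ F : (Fin n → D) → D, (∀ S ∈ Γ, IsPolymorphism F S.2) → IsPolymorphism F R) :
    R = {a | ∃ F : (Fin n → D) → D, (∀ S ∈ Γ, IsPolymorphism F S.2) ∧
      a = fun j => F fun i => r i j} := by
  subst hr
  ext a
  constructor
  · rintro ⟨i, rfl⟩
    exact ⟨fun g => g i, fun S _ => isPolymorphism_eval i S.2, rfl⟩
  · rintro ⟨F, hF, rfl⟩
    exact hPol F hF r fun i => ⟨i, rfl⟩

section Atoms

variable {n k m : ℕ} (e : Fin m ≃ (Fin n → D))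

open Classical in
noncomputable def polymorphismAtoms [Fintype D] (Γ : Finset ((l : ℕ) × Set (Fin l → D))) :
    List (Atom D k m) :=
  Γ.toList.flatMap fun S =>
    ((univ.filter fun ts : Fin n → Fin S.1 → D => ∀ i, ts i ∈ S.2).toList).map
      fun ts => Atom.rel S.1 S.2 fun j => Sum.inr (e.symm fun i => ts i j)

def columnAtoms (r : Fin n → Fin k → D) : List (Atom D k m) :=
  List.ofFn fun j => Atom.eq (Sum.inl j) (Sum.inr (e.symm fun i => r i j))

lemma overLang_of_mem_polymorphismAtoms [Fintype D] {Γ : Finset ((l : ℕ) × Set (Fin l → D))}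
    {A : Atom D k m} (hA : A ∈ polymorphismAtoms e Γ) : A.OverLang ↑Γ := by
  simp only [polymorphismAtoms, List.mem_flatMap, List.mem_map, mem_toList] at hA
  obtain ⟨S, hS, ts, -, rfl⟩ := hA
  exact hS

lemma overLang_of_mem_columnAtoms (Γ : Set ((l : ℕ) × Set (Fin l → D)))
    {r : Fin n → Fin k → D} {A : Atom D k m} (hA : A ∈ columnAtoms e r) : A.OverLang Γ := by
  obtain ⟨j, rfl⟩ := List.mem_ofFn.mp hA
  trivial

lemma forall_sat_polymorphismAtoms_iff [Fintype D] (Γ : Finset ((l : ℕ) × Set (Fin l → D)))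
    (a : Fin k → D) (b : Fin m → D) :
    (∀ A ∈ polymorphismAtoms e Γ, A.Sat a b) ↔ ∀ S ∈ Γ, IsPolymorphism (b ∘ e.symm) S.2 := by
  simp only [polymorphismAtoms, List.mem_flatMap, List.mem_map, mem_toList, mem_filter,
    mem_univ, true_and]
  constructor
  · intro h S hS ts hts
    exact h _ ⟨S, hS, ts, hts, rfl⟩
  · rintro h _ ⟨S, hS, ts, hts, rfl⟩
    exact h S hS ts hts

lemma forall_sat_columnAtoms_iff (r : Fin n → Fin k → D) (a : Fin k → D) (b : Fin m → D) :
    (∀ A ∈ columnAtoms e r, A.Sat a b) ↔ a = fun j => (b ∘ e.symm) fun i => r i j := by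
  simp only [columnAtoms, List.forall_mem_ofFn_iff, Atom.Sat, Sum.elim_inl, Sum.elim_inr,
    funext_iff, Function.comp_apply]

end Atoms

theorem ppDefinable_of_polymorphisms_preserve [Fintype D] {n k : ℕ}
    (Γ : Finset ((l : ℕ) × Set (Fin l → D))) {R : Set (Fin k → D)} {r : Fin n → Fin k → D}
    (hr : Set.range r = R)
    (hPol : ∀ F : (Fin n → D) → D, (∀ S ∈ Γ, IsPolymorphism F S.2) → IsPolymorphism F R) :
    ppDefinable ↑Γ R := by
  let e := (Fintype.equivFin (Fin n → D)).symm
  refine ⟨_, polymorphismAtoms e Γ ++ columnAtoms e r, ?_, ?_⟩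
  · intro A hA
    rcases List.mem_append.mp hA with hA | hA
    · exact overLang_of_mem_polymorphismAtoms e hA
    · exact overLang_of_mem_columnAtoms e _ hA
  · rw [eq_setOf_exists_polymorphism_apply_columns (Γ : Set _) hr hPol]
    ext a
    simp only [Set.mem_ofPred_eq, List.forall_mem_append, forall_sat_polymorphismAtoms_iff,
      forall_sat_columnAtoms_iff]
    exact (e.arrowCongr (Equiv.refl D)).surjective.exists

end IndicatorProblem

theorem pol_subset_implies_ppDefinable_general {D : Type*} [Fintype D]
    (Γ Γ' : Set ((l : ℕ) × Set (Fin l → D)))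
    (hΓ : Γ.Finite)
    (hPol : ∀ (n : ℕ) (f : (Fin n → D) → D),
      (∀ S ∈ Γ, IsPolymorphism f S.2) → ∀ S ∈ Γ', IsPolymorphism f S.2) :
    ∀ S ∈ Γ', ppDefinable Γ S.2 := by
  rintro ⟨k, R⟩ hS
  obtain ⟨Γ, rfl⟩ := hΓ.exists_finset_coe
  obtain ⟨n, r, -, hr⟩ := R.toFinite.fin_param
  exact ppDefinable_of_polymorphisms_preserve Γ hr fun F hF => hPol n F hF _ hS

/-- (Jeavons) Let `Γ, Γ'` be finite constraint languages over a finite domain.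
If `Pol(Γ) ⊆ Pol(Γ')`, then every relation of `Γ'` is pp-definable from `Γ`,
i.e. `Γ' ⊆ ⟨Γ⟩`. -/
theorem pol_subset_implies_ppDefinable {D : Type*} [Fintype D]
    (Γ Γ' : Set ((l : ℕ) × Set (Fin l → D)))
    (hΓ : Γ.Finite) (hΓ' : Γ'.Finite)
    (hPol : ∀ (n : ℕ) (f : (Fin n → D) → D),
      (∀ S ∈ Γ, IsPolymorphism f S.2) → ∀ S ∈ Γ', IsPolymorphism f S.2) :
    ∀ S ∈ Γ', ppDefinable Γ S.2 :=
  pol_subset_implies_ppDefinable_general Γ Γ' hΓ hPol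
end

section
/- (Post-type dichotomy for boolean clones) Every clone of operations over {0,1} either contains only essentially unary operations, or contains at least one of the four operations: binary AND, binary OR, ternary majority, ternary minority. -/
/-- A boolean operation of positive arity: `⟨n, f⟩` has arity `n + 1`. -/
abbrev BOp : Type := (n : ℕ) × ((Fin (n + 1) → Bool) → Bool)

def EssU {I : Type} (f : (I → Bool) → Bool) : Prop :=
  ∃ (i : I) (g : Bool → Bool), ∀ t, f t = g (t i)

instance {I : Type} [Fintype I] [DecidableEq I] (f : (I → Bool) → Bool) :
    Decidable (EssU f) := by unfold EssU; infer_instance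

def maj3 (x y z : Bool) : Bool := (x && y) || (x && z) || (y && z)

def mk3 (b0 b1 b2 b3 b4 b5 b6 b7 : Bool) : (Fin 3 → Bool) → Bool := fun t =>
  if t 0 then (if t 1 then (if t 2 then b7 else b6) else (if t 2 then b5 else b4))
  else (if t 1 then (if t 2 then b3 else b2) else (if t 2 then b1 else b0))

lemma lemA {I : Type} [Fintype I] [DecidableEq I] (hcard : 4 ≤ Fintype.card I)
    (f : (I → Bool) → Bool)
    (H : ∀ a b : I, a ≠ b → ∃ (v : Bool → Bool) (e : I), ∀ t, t a = t b → f t = v (t e)) :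
    EssU f := by
  have hne : Nonempty I := by rw [← Fintype.card_pos_iff]; omega
  have pigeon : ∀ t : I → Bool, ∃ a b : I, a ≠ b ∧ t a = t b := by
    intro t
    have h2 : Fintype.card Bool < Fintype.card I := by
      simp only [Fintype.card_bool]; omega
    obtain ⟨a, b, hab, h⟩ := Fintype.exists_ne_map_eq_of_card_lt t h2
    exact ⟨a, b, hab, h⟩
  have fresh : ∀ x y z : I, ∃ d : I, d ≠ x ∧ d ≠ y ∧ d ≠ z := by
    intro x y z
    by_contra hc
    push_neg at hc
    have hsub : (Finset.univ : Finset I) ⊆ {x, y, z} := by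
      intro d _
      simp only [Finset.mem_insert, Finset.mem_singleton]
      by_contra hd; push_neg at hd
      exact hd.2.2 (hc d hd.1 hd.2.1)
    have hle := Finset.card_le_card hsub
    have h3 : ({x, y, z} : Finset I).card ≤ 3 := by
      have h1 := Finset.card_insert_le x ({y, z} : Finset I)
      have h2 := Finset.card_insert_le y ({z} : Finset I)
      simp only [Finset.card_singleton] at h1 h2
      omega
    rw [Finset.card_univ] at hle
    omega
  by_cases hflat : ∀ a b : I, a ≠ b → ∀ t t' : I → Bool, t a = t b → t' a = t' b → f t = f t'
  · obtain ⟨i0⟩ := hne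
    refine ⟨i0, fun _ => f (fun _ => false), fun t => ?_⟩
    obtain ⟨a, b, hab, h⟩ := pigeon t
    exact hflat a b hab t (fun _ => false) h rfl
  · push_neg at hflat
    obtain ⟨a, b, hab, t0, t1, h0, h1, hne01⟩ := hflat
    have key : ∃ (i j l : I) (u : Bool → Bool), i ≠ j ∧ l ≠ i ∧ l ≠ j ∧
        u false ≠ u true ∧ ∀ t, t i = t j → f t = u (t l) := by
      obtain ⟨v, e, hv⟩ := H a b hab
      have hvne : v (t0 e) ≠ v (t1 e) := by
        rw [← hv t0 h0, ← hv t1 h1]; exact hne01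
      have hvft : v false ≠ v true := by
        intro hequ
        apply hvne
        cases he0 : t0 e <;> cases he1 : t1 e <;>
          first | rfl | exact hequ | exact hequ.symm
      by_cases hea : e ≠ a ∧ e ≠ b
      · exact ⟨a, b, e, v, hab, hea.1, hea.2, hvft, hv⟩
      · have hva : ∀ t : I → Bool, t a = t b → f t = v (t a) := by
          intro t ht
          rw [hv t ht]
          rcases not_and_or.mp hea with h | h
          · rw [not_not] at h; rw [h]
          · rw [not_not] at h; rw [h, ht]
        obtain ⟨c, hca, hcb, -⟩ := fresh a b a
        obtain ⟨d, hda, hdb, hdc⟩ := fresh a b c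
        obtain ⟨w, e', hw⟩ := H c d (Ne.symm hdc)
        set p : Bool → I → Bool := fun β x => if x = a ∨ x = b then β else false with hp
        have hpa : ∀ β, p β a = β := fun β => if_pos (Or.inl rfl)
        have hpb : ∀ β, p β b = β := fun β => if_pos (Or.inr rfl)
        have hpo : ∀ (β : Bool) (x : I), x ≠ a → x ≠ b → p β x = false :=
          fun β x h1 h2 => if_neg (by tauto)
        have hfp : ∀ β, f (p β) = v β := by
          intro β; rw [hva (p β) (by rw [hpa, hpb]), hpa]
        have hfpw : ∀ β, f (p β) = w (p β e') := by
          intro β; exact hw (p β) (by rw [hpo β c hca hcb, hpo β d hda hdb])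
        have he' : e' = a ∨ e' = b := by
          by_contra hne'
          push_neg at hne'
          have h0' := hfp false; have h1' := hfp true
          rw [hfpw false, hpo false e' hne'.1 hne'.2] at h0'
          rw [hfpw true, hpo true e' hne'.1 hne'.2] at h1'
          exact hvft (h0'.symm.trans h1')
        have hwv : ∀ β, w β = v β := by
          intro β
          have h1 := hfp β
          rw [hfpw β] at h1
          have hpe : p β e' = β := by
            rcases he' with h | h <;> rw [h]
            · exact hpa β
            · exact hpb β
          rw [hpe] at h1; exact h1
        have hwft : w false ≠ w true := by rw [hwv false, hwv true]; exact hvft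
        refine ⟨c, d, e', w, Ne.symm hdc, ?_, ?_, hwft, hw⟩
        · rcases he' with h | h <;> rw [h]
          · exact Ne.symm hca
          · exact Ne.symm hcb
        · rcases he' with h | h <;> rw [h]
          · exact Ne.symm hda
          · exact Ne.symm hdb
    obtain ⟨i, j, l, u, hij, hli, hlj, huft, hu⟩ := key
    have hld : ∀ d : I, d ≠ i → d ≠ j → d ≠ l → ∀ t : I → Bool, t l = t d → f t = u (t l) := by
      intro d hdi hdj hdl t htld
      obtain ⟨w, e, hw⟩ := H l d (Ne.symm hdl)
      set p : Bool → I → Bool := fun β x => if x = l ∨ x = d then β else false with hp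
      have hpl : ∀ β, p β l = β := fun β => if_pos (Or.inl rfl)
      have hpd : ∀ β, p β d = β := fun β => if_pos (Or.inr rfl)
      have hpo : ∀ (β : Bool) (x : I), x ≠ l → x ≠ d → p β x = false :=
        fun β x h1 h2 => if_neg (by tauto)
      have hfpu : ∀ β, f (p β) = u β := by
        intro β
        rw [hu (p β) (by rw [hpo β i (Ne.symm hli) (Ne.symm hdi), hpo β j (Ne.symm hlj) (Ne.symm hdj)]), hpl]
      have hfpw : ∀ β, f (p β) = w (p β e) := fun β => hw (p β) (by rw [hpl, hpd])
      have he : e = l ∨ e = d := by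
        by_contra hne'
        push_neg at hne'
        have h0' := hfpu false; have h1' := hfpu true
        rw [hfpw false, hpo false e hne'.1 hne'.2] at h0'
        rw [hfpw true, hpo true e hne'.1 hne'.2] at h1'
        exact huft (h0'.symm.trans h1')
      have hwu : ∀ β, w β = u β := by
        intro β
        have h1 := hfpu β
        rw [hfpw β] at h1
        have hpe : p β e = β := by
          rcases he with h | h <;> rw [h]
          · exact hpl β
          · exact hpd β
        rw [hpe] at h1; exact h1
      have hte : t e = t l := by
        rcases he with h | h
        · rw [h]
        · rw [h]; exact htld.symm
      rw [hw t htld, hte, hwu]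
    have step3 : ∀ j' : I, (j' = i ∨ j' = j) → ∀ d : I, d ≠ i → d ≠ j → d ≠ l →
        ∀ t : I → Bool, t j' = t d → f t = u (t l) := by
      intro j' hj' d hdi hdj hdl t htjd
      have hj'd : j' ≠ d := by
        rcases hj' with h | h <;> rw [h]
        · exact Ne.symm hdi
        · exact Ne.symm hdj
      obtain ⟨w, e, hw⟩ := H j' d hj'd
      set q : Bool → Bool → I → Bool :=
        fun β γ x => if x = l then γ else if x = i ∨ x = j ∨ x = d then β else false with hq
      have hql : ∀ β γ, q β γ l = γ := fun β γ => if_pos rfl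
      have hqi : ∀ β γ, q β γ i = β := by
        intro β γ; show (if i = l then γ else _) = β
        rw [if_neg (Ne.symm hli), if_pos (Or.inl rfl)]
      have hqj : ∀ β γ, q β γ j = β := by
        intro β γ; show (if j = l then γ else _) = β
        rw [if_neg (Ne.symm hlj), if_pos (Or.inr (Or.inl rfl))]
      have hqd : ∀ β γ, q β γ d = β := by
        intro β γ; show (if d = l then γ else _) = β
        rw [if_neg hdl, if_pos (Or.inr (Or.inr rfl))]
      have hqo : ∀ (β γ : Bool) (x : I), x ≠ l → x ≠ i → x ≠ j → x ≠ d → q β γ x = false := by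
        intro β γ x h1 h2 h3 h4
        show (if x = l then γ else _) = false
        rw [if_neg h1, if_neg (by tauto)]
      have hqj' : ∀ β γ, q β γ j' = β := by
        rcases hj' with h | h <;> rw [h]
        · exact hqi
        · exact hqj
      have hfq : ∀ β γ, f (q β γ) = u γ := fun β γ => by
        rw [hu _ (by rw [hqi, hqj]), hql]
      have hfqw : ∀ β γ, f (q β γ) = w (q β γ e) := fun β γ => hw _ (by rw [hqj', hqd])
      have hel : e = l := by
        by_contra hne'
        have hsame : q false false e = q false true e := by
          show (if e = l then (false : Bool) else _) = (if e = l then true else _)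
          rw [if_neg hne', if_neg hne']
        have h0' := hfq false false; have h1' := hfq false true
        rw [hfqw false false, hsame] at h0'
        rw [hfqw false true] at h1'
        exact huft (h0'.symm.trans h1')
      have hwu : ∀ γ, w γ = u γ := by
        intro γ
        have h1 := hfq false γ
        rw [hfqw false γ, hel, hql] at h1
        exact h1
      rw [hw t htjd, hel, hwu]
    refine ⟨l, u, fun t => ?_⟩
    by_cases hij' : t i = t j
    · exact hu t hij'
    · by_cases hdx : ∃ d : I, d ≠ i ∧ d ≠ j ∧ d ≠ l ∧ t l = t d
      · obtain ⟨d, h1, h2, h3, h4⟩ := hdx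
        exact hld d h1 h2 h3 t h4
      · push_neg at hdx
        obtain ⟨d, hdi, hdj, hdl⟩ := fresh i j l
        have htd : t l ≠ t d := hdx d hdi hdj hdl
        by_cases hti : t i = t l
        · have hjd : t j = t d := by
            revert hij' htd hti
            cases t i <;> cases t j <;> cases t l <;> cases t d <;> decide
          exact step3 j (Or.inr rfl) d hdi hdj hdl t hjd
        · have hid : t i = t d := by
            have hjl : t j = t l := by
              revert hij' hti
              cases t i <;> cases t j <;> cases t l <;> decide
            revert hij' htd hjl
            cases t i <;> cases t j <;> cases t l <;> cases t d <;> decide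
          exact step3 i (Or.inl rfl) d hdi hdj hdl t hid

lemma lemB (k : ℕ) : ∀ (I : Type) [Fintype I] [DecidableEq I], Nonempty I →
    Fintype.card I = k → ∀ f : (I → Bool) → Bool, ¬ EssU f →
    ∃ σ : I → Fin 3, ¬ EssU (fun t : Fin 3 → Bool => f (fun l => t (σ l))) := by
  induction k using Nat.strong_induction_on with
  | _ k IH =>
    intro I _ _ hne hcard f hf
    by_cases hsmall : Fintype.card I ≤ 3
    · obtain ⟨e⟩ : Nonempty (I ↪ Fin 3) := by
        rw [Function.Embedding.nonempty_iff_card_le]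
        simpa using hsmall
      refine ⟨e, ?_⟩
      rintro ⟨m, g, hg⟩
      set ext : (I → Bool) → Bool → (Fin 3 → Bool) :=
        fun s c x => if h : ∃ i : I, e i = x then s h.choose else c with hext
      have hexte : ∀ (s : I → Bool) (c : Bool) (i : I), ext s c (e i) = s i := by
        intro s c i
        have hx : ∃ i' : I, e i' = e i := ⟨i, rfl⟩
        show (if h : ∃ i' : I, e i' = e i then s h.choose else c) = s i
        rw [dif_pos hx]
        exact congrArg s (e.injective hx.choose_spec)
      have hfs : ∀ (s : I → Bool) (c : Bool), f s = g (ext s c m) := by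
        intro s c
        have h1 := hg (ext s c)
        have h2 : (fun l => ext s c (e l)) = s := funext (hexte s c)
        nth_rewrite 1 [← h2]
        exact h1
      by_cases hm : ∃ i0 : I, e i0 = m
      · obtain ⟨i0, hi0⟩ := hm
        apply hf
        refine ⟨i0, g, fun s => ?_⟩
        rw [hfs s false, ← hi0, hexte]
      · apply hf
        obtain ⟨i0⟩ := hne
        refine ⟨i0, fun _ => g false, fun s => ?_⟩
        have hc : ∀ c : Bool, ext s c m = c := by
          intro c
          show (if h : ∃ i' : I, e i' = m then s h.choose else c) = c
          rw [dif_neg hm]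
        rw [hfs s false, hc]
    · push_neg at hsmall
      by_cases hex : ∃ i j : I, i ≠ j ∧
          ¬ EssU (fun t : I → Bool => f (fun l => t (if l = i then j else l)))
      · obtain ⟨i, j, hij, hg⟩ := hex
        set ρ : I → I := fun l => if l = i then j else l with hρdef
        have hρ : ∀ l, ρ l ≠ i := by
          intro l
          show (if l = i then j else l) ≠ i
          by_cases h : l = i
          · rw [if_pos h]; exact Ne.symm hij
          · rw [if_neg h]; exact h
        set g : (I → Bool) → Bool := fun t => f (fun l => t (ρ l)) with hgdef
        set h : ({x : I // x ≠ i} → Bool) → Bool :=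
          fun s => g (fun l => if hl : l = i then false else s ⟨l, hl⟩) with hhdef
        have hcard' : Fintype.card {x : I // x ≠ i} = k - 1 := by
          simp only [Fintype.card_subtype_compl, Fintype.card_subtype_eq]
          omega
        have hrestr : ∀ t : I → Bool, h (fun l' => t l'.1) = g t := by
          intro t
          show f _ = f _
          congr 1
          funext l
          exact dif_neg (hρ l)
        have hh : ¬ EssU h := by
          rintro ⟨e', v, hv⟩
          apply hg
          refine ⟨e'.1, v, fun t => ?_⟩
          have := hv (fun l' => t l'.1)
          rw [hrestr t] at this
          exact this
        have hne' : Nonempty {x : I // x ≠ i} := by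
          rw [← Fintype.card_pos_iff, hcard']
          omega
        obtain ⟨σ', hσ'⟩ := IH (k - 1) (by omega) {x : I // x ≠ i} hne' hcard' h hh
        refine ⟨fun l => σ' ⟨ρ l, hρ l⟩, ?_⟩
        intro hEss
        apply hσ'
        have heq : (fun t : Fin 3 → Bool => h (fun l' => t (σ' l'))) =
            (fun t : Fin 3 → Bool => f (fun l => t (σ' ⟨ρ l, hρ l⟩))) := by
          funext t
          show f _ = f _
          congr 1
          funext l
          show (if hl : ρ l = i then false else t (σ' ⟨ρ l, hl⟩)) = t (σ' ⟨ρ l, hρ l⟩)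
          rw [dif_neg (hρ l)]
        rw [heq]
        exact hEss
      · exfalso
        apply hf
        apply lemA (by omega) f
        intro a b hab
        push_neg at hex
        obtain ⟨m, v, hv⟩ := hex a b hab
        refine ⟨v, m, fun t ht => ?_⟩
        have h1 := hv t
        have h2 : (fun l => t (if l = a then b else l)) = t := by
          funext l
          by_cases h : l = a
          · rw [if_pos h, h]; exact ht.symm
          · rw [if_neg h]
        nth_rewrite 1 [← h2]
        exact h1

lemma mem_of_eq {C : Set BOp} {n : ℕ} {F G : (Fin (n + 1) → Bool) → Bool}
    (h : (⟨n, F⟩ : BOp) ∈ C) (e : F = G) : (⟨n, G⟩ : BOp) ∈ C := e ▸ h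

section Clone

variable (C : Set BOp)
    (hproj : ∀ (n : ℕ) (i : Fin (n + 1)), (⟨n, fun t => t i⟩ : BOp) ∈ C)
    (hcomp : ∀ (n m : ℕ) (f : (Fin (n + 1) → Bool) → Bool)
        (gs : Fin (n + 1) → (Fin (m + 1) → Bool) → Bool),
      (⟨n, f⟩ : BOp) ∈ C → (∀ j, (⟨m, gs j⟩ : BOp) ∈ C) →
      (⟨m, fun t => f (fun j => gs j t)⟩ : BOp) ∈ C)

include hproj hcomp in
lemma minor_mem {n m : ℕ} (f : (Fin (n + 1) → Bool) → Bool) (σ : Fin (n + 1) → Fin (m + 1))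
    (hf : (⟨n, f⟩ : BOp) ∈ C) :
    (⟨m, fun t => f (fun j => t (σ j))⟩ : BOp) ∈ C :=
  hcomp n m f (fun j t => t (σ j)) hf (fun j => hproj m (σ j))

include hcomp in
lemma comp2 {m : ℕ} (f : (Fin 2 → Bool) → Bool) (g0 g1 : (Fin (m + 1) → Bool) → Bool)
    (hf : (⟨1, f⟩ : BOp) ∈ C) (h0 : (⟨m, g0⟩ : BOp) ∈ C) (h1 : (⟨m, g1⟩ : BOp) ∈ C) :
    (⟨m, fun t => f (fun j : Fin 2 => if j = 0 then g0 t else g1 t)⟩ : BOp) ∈ C :=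
  hcomp 1 m f (fun j t => if j = 0 then g0 t else g1 t) hf (by
    intro j
    fin_cases j
    · simpa using h0
    · simpa using h1)

include hcomp in
lemma comp3 {m : ℕ} (f : (Fin 3 → Bool) → Bool) (g0 g1 g2 : (Fin (m + 1) → Bool) → Bool)
    (hf : (⟨2, f⟩ : BOp) ∈ C) (h0 : (⟨m, g0⟩ : BOp) ∈ C) (h1 : (⟨m, g1⟩ : BOp) ∈ C)
    (h2 : (⟨m, g2⟩ : BOp) ∈ C) :
    (⟨m, fun t => f (fun j : Fin 3 => if j = 0 then g0 t else if j = 1 then g1 t else g2 t)⟩ :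
      BOp) ∈ C :=
  hcomp 2 m f (fun j t => if j = 0 then g0 t else if j = 1 then g1 t else g2 t) hf (by
    intro j
    fin_cases j
    · simpa using h0
    · simpa using h1
    · simpa using h2)

lemma bin_class : ∀ g : (Fin 2 → Bool) → Bool, ¬ EssU g →
    g = (fun t => t 0 && t 1) ∨
    g = (fun t => t 0 && !t 1) ∨
    g = (fun t => !t 0 && t 1) ∨
    g = (fun t => Bool.xor (t 0) (t 1)) ∨
    g = (fun t => t 0 || t 1) ∨
    g = (fun t => !(t 0 || t 1)) ∨
    g = (fun t => t 0 == t 1) ∨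
    g = (fun t => t 0 || !t 1) ∨
    g = (fun t => !t 0 || t 1) ∨
    g = (fun t => !(t 0 && t 1)) := by decide

lemma tern_class (b0 b1 b2 b3 b4 b5 b6 b7 : Bool) :
    ¬ EssU (mk3 b0 b1 b2 b3 b4 b5 b6 b7) →
    EssU (fun t : Fin 2 → Bool => mk3 b0 b1 b2 b3 b4 b5 b6 b7 ![t 0, t 0, t 1]) →
    EssU (fun t : Fin 2 → Bool => mk3 b0 b1 b2 b3 b4 b5 b6 b7 ![t 0, t 1, t 0]) →
    EssU (fun t : Fin 2 → Bool => mk3 b0 b1 b2 b3 b4 b5 b6 b7 ![t 0, t 1, t 1]) →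
    (mk3 b0 b1 b2 b3 b4 b5 b6 b7 = fun t => maj3 (t 0) (t 1) (t 2)) ∨
    (mk3 b0 b1 b2 b3 b4 b5 b6 b7 = fun t => maj3 (t 0) (t 1) (!t 2)) ∨
    (mk3 b0 b1 b2 b3 b4 b5 b6 b7 = fun t => maj3 (t 0) (!t 1) (t 2)) ∨
    (mk3 b0 b1 b2 b3 b4 b5 b6 b7 = fun t => Bool.xor (Bool.xor (t 0) (t 1)) (t 2)) ∨
    (mk3 b0 b1 b2 b3 b4 b5 b6 b7 = fun t => !maj3 (t 0) (!t 1) (!t 2)) ∨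
    (mk3 b0 b1 b2 b3 b4 b5 b6 b7 = fun t => maj3 (t 0) (!t 1) (!t 2)) ∨
    (mk3 b0 b1 b2 b3 b4 b5 b6 b7 = fun t => !(Bool.xor (Bool.xor (t 0) (t 1)) (t 2))) ∨
    (mk3 b0 b1 b2 b3 b4 b5 b6 b7 = fun t => !maj3 (t 0) (!t 1) (t 2)) ∨
    (mk3 b0 b1 b2 b3 b4 b5 b6 b7 = fun t => !maj3 (t 0) (t 1) (!t 2)) ∨
    (mk3 b0 b1 b2 b3 b4 b5 b6 b7 = fun t => !maj3 (t 0) (t 1) (t 2)) := by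
  revert b0 b1 b2 b3 b4 b5 b6 b7; decide

include hproj hcomp in
lemma binary_case (B : (Fin 2 → Bool) → Bool) (hB : (⟨1, B⟩ : BOp) ∈ C) (hBe : ¬ EssU B) :
    (⟨1, fun t => t 0 && t 1⟩ : BOp) ∈ C ∨
    (⟨1, fun t => t 0 || t 1⟩ : BOp) ∈ C ∨
    (⟨2, fun t => (t 0 && t 1) || (t 0 && t 2) || (t 1 && t 2)⟩ : BOp) ∈ C ∨
    (⟨2, fun t => Bool.xor (Bool.xor (t 0) (t 1)) (t 2)⟩ : BOp) ∈ C := by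
  rcases bin_class B hBe with h|h|h|h|h|h|h|h|h|h <;> subst h
  · exact Or.inl hB
  · exact Or.inl (mem_of_eq (comp2 C hcomp _ (fun t => t 0) _ hB (hproj 1 0) hB) (by decide))
  · exact Or.inl (mem_of_eq (comp2 C hcomp _ _ (fun t => t 1) hB hB (hproj 1 1)) (by decide))
  · exact Or.inr (Or.inr (Or.inr (mem_of_eq
      (comp2 C hcomp _ (fun t : Fin 3 → Bool => t 0) _ hB (hproj 2 0)
        (minor_mem C hproj hcomp _ ![1, 2] hB)) (by decide))))
  · exact Or.inr (Or.inl hB)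
  · exact Or.inl (mem_of_eq (comp2 C hcomp _ _ _ hB
      (minor_mem C hproj hcomp _ ![0, 0] hB) (minor_mem C hproj hcomp _ ![1, 1] hB))
      (by decide))
  · exact Or.inr (Or.inr (Or.inr (mem_of_eq
      (comp2 C hcomp _ (fun t : Fin 3 → Bool => t 0) _ hB (hproj 2 0)
        (minor_mem C hproj hcomp _ ![1, 2] hB)) (by decide))))
  · exact Or.inr (Or.inl (mem_of_eq (comp2 C hcomp _ (fun t => t 0) _ hB (hproj 1 0) hB)
      (by decide)))
  · exact Or.inr (Or.inl (mem_of_eq (comp2 C hcomp _ _ (fun t => t 1) hB hB (hproj 1 1))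
      (by decide)))
  · exact Or.inr (Or.inl (mem_of_eq (comp2 C hcomp _ _ _ hB
      (minor_mem C hproj hcomp _ ![0, 0] hB) (minor_mem C hproj hcomp _ ![1, 1] hB))
      (by decide)))

include hproj hcomp in
lemma ternary_case (M : (Fin 3 → Bool) → Bool) (hM : (⟨2, M⟩ : BOp) ∈ C) (hMe : ¬ EssU M) :
    (⟨1, fun t => t 0 && t 1⟩ : BOp) ∈ C ∨
    (⟨1, fun t => t 0 || t 1⟩ : BOp) ∈ C ∨
    (⟨2, fun t => (t 0 && t 1) || (t 0 && t 2) || (t 1 && t 2)⟩ : BOp) ∈ C ∨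
    (⟨2, fun t => Bool.xor (Bool.xor (t 0) (t 1)) (t 2)⟩ : BOp) ∈ C := by
  by_cases hbin : ∃ τ : Fin 3 → Fin 2, ¬ EssU (fun t : Fin 2 → Bool => M (fun l => t (τ l)))
  · obtain ⟨τ, hτ⟩ := hbin
    exact binary_case C hproj hcomp _ (minor_mem C hproj hcomp _ τ hM) hτ
  · push_neg at hbin
    have hid : ∀ τ : Fin 3 → Fin 2,
        EssU (fun t : Fin 2 → Bool => M ![t (τ 0), t (τ 1), t (τ 2)]) := by
      intro τ
      have heq : (fun t : Fin 2 → Bool => M (fun l => t (τ l))) =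
          (fun t : Fin 2 → Bool => M ![t (τ 0), t (τ 1), t (τ 2)]) := by
        funext t; congr 1; funext l; fin_cases l <;> rfl
      rw [← heq]
      exact hbin τ
    have h1 := hid ![0, 0, 1]
    have h2 := hid ![0, 1, 0]
    have h3 := hid ![0, 1, 1]
    simp only [Matrix.cons_val_zero, Matrix.cons_val_one, Matrix.head_cons,
      Matrix.cons_val_two, Matrix.tail_cons] at h1 h2 h3
    have hMeq : M = mk3 (M ![false, false, false]) (M ![false, false, true])
        (M ![false, true, false]) (M ![false, true, true]) (M ![true, false, false])
        (M ![true, false, true]) (M ![true, true, false]) (M ![true, true, true]) := by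
      funext t
      have ht : t = ![t 0, t 1, t 2] := by
        funext i; fin_cases i <;> rfl
      conv_lhs => rw [ht]
      cases h0 : t 0 <;> cases h1 : t 1 <;> cases h2 : t 2 <;>
        simp [mk3, h0, h1, h2]
    rw [hMeq] at hM hMe h1 h2 h3
    rcases tern_class _ _ _ _ _ _ _ _ hMe h1 h2 h3 with h|h|h|h|h|h|h|h|h|h
    · exact Or.inr (Or.inr (Or.inl (mem_of_eq hM (h.trans (funext fun t => rfl)))))
    · have hM' := mem_of_eq hM h
      exact Or.inr (Or.inr (Or.inl (mem_of_eq
        (comp3 C hcomp _ (fun t => t 0) (fun t => t 1) _ hM' (hproj 2 0) (hproj 2 1) hM')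
        (by decide))))
    · have hM' := mem_of_eq hM h
      exact Or.inr (Or.inr (Or.inl (mem_of_eq
        (comp3 C hcomp _ (fun t => t 0) _ (fun t => t 2) hM' (hproj 2 0) hM' (hproj 2 2))
        (by decide))))
    · exact Or.inr (Or.inr (Or.inr (mem_of_eq hM h)))
    · have hM' := mem_of_eq hM h
      exact Or.inr (Or.inr (Or.inr (mem_of_eq
        (comp3 C hcomp _ (fun t => t 0) _ _ hM' (hproj 2 0)
          (minor_mem C hproj hcomp _ ![1, 0, 2] hM') (minor_mem C hproj hcomp _ ![2, 0, 1] hM'))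
        (by decide))))
    · have hM' := mem_of_eq hM h
      exact Or.inr (Or.inr (Or.inl (mem_of_eq
        (comp3 C hcomp _ (fun t => t 0) _ _ hM' (hproj 2 0)
          (minor_mem C hproj hcomp _ ![0, 0, 1] hM') (minor_mem C hproj hcomp _ ![0, 0, 2] hM'))
        (by decide))))
    · have hM' := mem_of_eq hM h
      exact Or.inr (Or.inr (Or.inr (mem_of_eq
        (comp3 C hcomp _ (fun t => t 0) (fun t => t 0) _ hM' (hproj 2 0) (hproj 2 0) hM')
        (by decide))))
    · have hM' := mem_of_eq hM h
      exact Or.inr (Or.inr (Or.inl (mem_of_eq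
        (comp3 C hcomp _ _ (fun t => t 1) _ hM'
          (minor_mem C hproj hcomp _ ![0, 0, 0] hM') (hproj 2 1)
          (minor_mem C hproj hcomp _ ![0, 0, 2] hM'))
        (by decide))))
    · have hM' := mem_of_eq hM h
      exact Or.inr (Or.inr (Or.inl (mem_of_eq
        (comp3 C hcomp _ _ _ (fun t => t 2) hM'
          (minor_mem C hproj hcomp _ ![0, 0, 0] hM') (minor_mem C hproj hcomp _ ![0, 1, 0] hM')
          (hproj 2 2))
        (by decide))))
    · have hM' := mem_of_eq hM h
      exact Or.inr (Or.inr (Or.inl (mem_of_eq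
        (comp3 C hcomp _ (fun t => t 0) _ _ hM' (hproj 2 0)
          (minor_mem C hproj hcomp _ ![0, 0, 0] hM') hM')
        (by decide))))

end Clone


/-- (Post-type dichotomy for boolean clones) Every clone of operations over
`{0,1}` — a set of finitary operations containing all projections and closed
under composition — either contains only essentially unary operations, or
contains at least one of: binary AND, binary OR, ternary majority, ternary
minority. -/
theorem boolean_clone_dichotomy (C : Set BOp)
    (hproj : ∀ (n : ℕ) (i : Fin (n + 1)),
      (⟨n, fun t => t i⟩ : BOp) ∈ C)
    (hcomp : ∀ (n m : ℕ) (f : (Fin (n + 1) → Bool) → Bool)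
        (gs : Fin (n + 1) → (Fin (m + 1) → Bool) → Bool),
      (⟨n, f⟩ : BOp) ∈ C → (∀ j, (⟨m, gs j⟩ : BOp) ∈ C) →
      (⟨m, fun t => f (fun j => gs j t)⟩ : BOp) ∈ C) :
    (∀ p ∈ C, ∃ (i : Fin (p.1 + 1)) (g : Bool → Bool), ∀ t, p.2 t = g (t i)) ∨
    (⟨1, fun t => t 0 && t 1⟩ : BOp) ∈ C ∨
    (⟨1, fun t => t 0 || t 1⟩ : BOp) ∈ C ∨
    (⟨2, fun t => (t 0 && t 1) || (t 0 && t 2) || (t 1 && t 2)⟩ : BOp) ∈ C ∨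
    (⟨2, fun t => Bool.xor (Bool.xor (t 0) (t 1)) (t 2)⟩ : BOp) ∈ C := by
  by_cases hA : ∀ p ∈ C, ∃ (i : Fin (p.1 + 1)) (g : Bool → Bool), ∀ t, p.2 t = g (t i)
  · exact Or.inl hA
  · right
    push_neg at hA
    obtain ⟨p, hp, hpne⟩ := hA
    obtain ⟨n, f⟩ := p
    have hfe : ¬ EssU f := by
      rintro ⟨i, g, hg⟩
      obtain ⟨t, ht⟩ := hpne i g
      exact ht (hg t)
    obtain ⟨σ, hσ⟩ := lemB (Fintype.card (Fin (n + 1))) (Fin (n + 1)) ⟨0⟩ rfl f hfe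
    exact ternary_case C hproj hcomp _ (minor_mem C hproj hcomp f σ hp) hσ
end

section
/- There is no idempotent operation g : {0,1}^m → {0,1} with m ≥ 4 such that every identification of two arguments of g yields a projection, but g itself is not a projection. -/
private lemma exists_fourth {m : ℕ} (hm : 4 ≤ m) (i j p : Fin m) :
    ∃ k : Fin m, k ≠ i ∧ k ≠ j ∧ k ≠ p := by
  by_contra h
  push_neg at h
  have hsub : (Finset.univ : Finset (Fin m)) ⊆ {i, j, p} := by
    intro k _
    by_cases h1 : k = i
    · simp [h1]
    by_cases h2 : k = j
    · simp [h2]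
    · simp [h k h1 h2]
  have hc := Finset.card_le_card hsub
  have h3 : ({i, j, p} : Finset (Fin m)).card ≤ 3 := by
    have a1 := Finset.card_insert_le i ({j, p} : Finset (Fin m))
    have a2 := Finset.card_insert_le j ({p} : Finset (Fin m))
    have a3 : ({p} : Finset (Fin m)).card = 1 := Finset.card_singleton p
    omega
  simp [Finset.card_univ] at hc
  omega

private lemma aux_ip {m : ℕ} (hm : 4 ≤ m) (g : (Fin m → Bool) → Bool)
    (hident : ∀ i j : Fin m, i ≠ j →
      ∃ p : Fin m, ∀ x : Fin m → Bool, x i = x j → g x = x p)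
    {i j p : Fin m} (hij : i ≠ j) (hip : i ≠ p) (hjp : j ≠ p)
    (H : ∀ x : Fin m → Bool, x i = x j → g x = x p) :
    ∀ x : Fin m → Bool, x i = x p → g x = x p := by
  obtain ⟨k, hki, hkj, hkp⟩ := exists_fourth hm i j p
  obtain ⟨q, hq⟩ := hident i p hip
  have hq3 : q = i ∨ q = j ∨ q = p := by
    by_contra h
    push_neg at h
    obtain ⟨h1, h2, h3⟩ := h
    have e1 : g (fun t => decide (q = t)) = decide (q = p) :=
      H _ (by simp [h1, h2])
    have e2 : g (fun t => decide (q = t)) = decide (q = q) :=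
      hq _ (by simp [h1, h3])
    rw [e1] at e2
    simp [h3] at e2
  rcases hq3 with h | h | h
  · intro x hxip
    rw [hq x hxip, h]
    exact hxip
  · -- q = j : derive a contradiction
    exfalso
    rw [h] at hq
    obtain ⟨r, hr⟩ := hident j k (Ne.symm hkj)
    have hrp : r = p := by
      by_contra hne
      have e1 : g (fun t => decide (t ≠ p)) = decide (¬ p = p) :=
        H _ (by simp [hip, hjp])
      have e2 : g (fun t => decide (t ≠ p)) = decide (¬ r = p) :=
        hr _ (by simp [hjp, hkp])
      rw [e1] at e2
      simp [hne] at e2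
    rw [hrp] at hr
    have e1 : g (fun t => decide (t = j ∨ t = k)) = decide (j = j ∨ j = k) :=
      hq _ (by simp [hij, Ne.symm hki, Ne.symm hjp, Ne.symm hkp])
    have e2 : g (fun t => decide (t = j ∨ t = k)) = decide (p = j ∨ p = k) :=
      hr _ (by simp)
    rw [e1] at e2
    simp [Ne.symm hjp, Ne.symm hkp] at e2
  · intro x hxip
    rw [hq x hxip, h]

private lemma from_outer {m : ℕ} (hm : 4 ≤ m) (g : (Fin m → Bool) → Bool)
    (hident : ∀ i j : Fin m, i ≠ j →
      ∃ p : Fin m, ∀ x : Fin m → Bool, x i = x j → g x = x p)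
    {i j p : Fin m} (hij : i ≠ j) (hip : i ≠ p) (hjp : j ≠ p)
    (H : ∀ x : Fin m → Bool, x i = x j → g x = x p) :
    ∃ p : Fin m, ∀ x : Fin m → Bool, g x = x p := by
  have Qi := aux_ip hm g hident hij hip hjp H
  have Qj := aux_ip hm g hident (Ne.symm hij) hjp hip (fun x h => H x h.symm)
  refine ⟨p, fun x => ?_⟩
  cases hbi : x i <;> cases hbj : x j <;> cases hbp : x p <;>
    first
      | exact (H x (hbi.trans hbj.symm)).trans hbp
      | exact (Qi x (hbi.trans hbp.symm)).trans hbp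
      | exact (Qj x (hbj.trans hbp.symm)).trans hbp

private lemma main_aux {m : ℕ} (hm : 4 ≤ m) (g : (Fin m → Bool) → Bool)
    (hident : ∀ i j : Fin m, i ≠ j →
      ∃ p : Fin m, ∀ x : Fin m → Bool, x i = x j → g x = x p)
    (i0 i1 i2 i3 : Fin m)
    (d01 : i0 ≠ i1) (d02 : i0 ≠ i2) (d03 : i0 ≠ i3)
    (d12 : i1 ≠ i2) (d13 : i1 ≠ i3) (d23 : i2 ≠ i3) :
    ∃ p : Fin m, ∀ x : Fin m → Bool, g x = x p := by
  obtain ⟨p, hp⟩ := hident i0 i1 d01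
  by_cases hpc : p = i0 ∨ p = i1
  · obtain ⟨p', hp'⟩ := hident i2 i3 d23
    by_cases hpc' : p' = i2 ∨ p' = i3
    · -- both inner: contradiction
      exfalso
      set x : Fin m → Bool := fun t => decide (t = i2 ∨ t = i3) with hx
      have hx0 : x i0 = false := by simp [hx, d02, d03]
      have hx1 : x i1 = false := by simp [hx, d12, d13]
      have hx2 : x i2 = true := by simp [hx]
      have hx3 : x i3 = true := by simp [hx]
      have e1 : g x = false := by
        have h := hp x (hx0.trans hx1.symm)
        rcases hpc with rfl | rfl
        · rw [h, hx0]
        · rw [h, hx1]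
      have e2 : g x = true := by
        have h := hp' x (hx2.trans hx3.symm)
        rcases hpc' with rfl | rfl
        · rw [h, hx2]
        · rw [h, hx3]
      rw [e1] at e2
      exact Bool.false_ne_true e2
    · push_neg at hpc'
      exact from_outer hm g hident d23 (Ne.symm hpc'.1) (Ne.symm hpc'.2) hp'
  · push_neg at hpc
    exact from_outer hm g hident d01 (Ne.symm hpc.1) (Ne.symm hpc.2) hp

/-- There is no idempotent operation `g : {0,1}^m → {0,1}` with `m ≥ 4` such
that every identification of two arguments of `g` yields a projection while
`g` itself is not a projection.  Equivalently: if `g` is idempotent and for all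
distinct coordinates `i ≠ j` the operation obtained by identifying the
arguments `i` and `j` is a projection (i.e. there is a coordinate `p` with
`g x = x p` whenever `x i = x j`), then `g` is itself a projection. -/
theorem no_nontrivial_high_arity_semiprojection (m : ℕ) (hm : 4 ≤ m)
    (g : (Fin m → Bool) → Bool)
    (hid : ∀ c : Bool, g (fun _ => c) = c)
    (hident : ∀ i j : Fin m, i ≠ j →
      ∃ p : Fin m, ∀ x : Fin m → Bool, x i = x j → g x = x p) :
    ∃ p : Fin m, ∀ x : Fin m → Bool, g x = x p := by
  exact main_aux hm g hident ⟨0, by omega⟩ ⟨1, by omega⟩ ⟨2, by omega⟩ ⟨3, by omega⟩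
    (Fin.ne_of_val_ne (by norm_num)) (Fin.ne_of_val_ne (by norm_num))
    (Fin.ne_of_val_ne (by norm_num)) (Fin.ne_of_val_ne (by norm_num))
    (Fin.ne_of_val_ne (by norm_num)) (Fin.ne_of_val_ne (by norm_num))
end

section
/- (Extension property induction for majority) Let φ be a set of constraints over variables V with relations preserved by the ternary majority operation on a finite domain D, such that there is a constraint on every at-most-3-element subset of variables. If φ has the 2-extension property, then φ has the n-extension property for all n ≥ 2: every partial solution on n variables extends to a partial solution on one additional variable. -/
/-- A constraint over variables `V` and domain `D`: an arity `k`, a `k`-ary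
relation, and a scope assigning a variable to each coordinate. -/
abbrev Constraint (V D : Type*) : Type _ := (k : ℕ) × (Set (Fin k → D) × (Fin k → V))

/-- `f` is a partial solution of the instance `φ` on the variable set `W`:
for every constraint there is a tuple of its relation agreeing with `f` on the
scope variables lying in `W`. -/
def PartialSol {V D : Type*} (φ : List (Constraint V D)) (W : Set V)
    (f : V → D) : Prop :=
  ∀ c ∈ φ, ∃ t ∈ c.2.1, ∀ i, c.2.2 i ∈ W → t i = f (c.2.2 i)

/-- (Extension property induction for majority) Let `φ` be a set of constraints
over variables `V` with relations over a finite domain `D` preserved by a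
ternary majority (near-unanimity) operation `maj`, such that there is a
constraint whose scope is exactly any given nonempty set of at most 3
variables.  If `φ` has the 2-extension property, then `φ` has the `n`-extension
property for every `n ≥ 2`: every partial solution on `n` variables extends to
a partial solution on one additional variable. -/
theorem majority_extension_property {V D : Type*} [Fintype D]
    (maj : D → D → D → D)
    (hmaj : ∀ a b : D, maj a a b = a ∧ maj a b a = a ∧ maj b a a = a)
    (φ : List (Constraint V D))
    (hpres : ∀ c ∈ φ, ∀ t₁ ∈ c.2.1, ∀ t₂ ∈ c.2.1, ∀ t₃ ∈ c.2.1,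
      (fun i => maj (t₁ i) (t₂ i) (t₃ i)) ∈ c.2.1)
    (hcover : ∀ W : Finset V, W.Nonempty → W.card ≤ 3 →
      ∃ c ∈ φ, Set.range c.2.2 = (W : Set V))
    (h2ext : ∀ W : Finset V, W.card = 2 → ∀ v : V, ∀ f : V → D,
      PartialSol φ (W : Set V) f →
      ∃ f' : V → D, (∀ w ∈ W, f' w = f w) ∧
        PartialSol φ ((W : Set V) ∪ {v}) f') :
    ∀ n : ℕ, 2 ≤ n → ∀ W : Finset V, W.card = n → ∀ v : V, ∀ f : V → D,
      PartialSol φ (W : Set V) f →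
      ∃ f' : V → D, (∀ w ∈ W, f' w = f w) ∧
        PartialSol φ ((W : Set V) ∪ {v}) f' := by
  have mono : ∀ (W' W : Set V) (f : V → D), W' ⊆ W → PartialSol φ W f →
      PartialSol φ W' f := by
    intro W' W f hsub h c hc
    obtain ⟨t, ht, hag⟩ := h c hc
    exact ⟨t, ht, fun i hi => hag i (hsub hi)⟩
  have key : ∀ a b c d : D,
      ((a = d ∧ b = d) ∨ (a = d ∧ c = d) ∨ (b = d ∧ c = d)) → maj a b c = d := by
    rintro a b c d (⟨h1, h2⟩ | ⟨h1, h2⟩ | ⟨h1, h2⟩)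
    · rw [h1, h2]; exact (hmaj d c).1
    · rw [h1, h2]; exact (hmaj d b).2.1
    · rw [h1, h2]; exact (hmaj d a).2.2
  classical
  intro n hn
  induction n, hn using Nat.le_induction with
  | base => exact h2ext
  | succ n hn ih =>
    intro W hW v f hf
    obtain ⟨w₁, hw₁⟩ := Finset.card_pos.mp (by omega : 0 < W.card)
    obtain ⟨w₂, hw₂⟩ : (W.erase w₁).Nonempty :=
      Finset.card_pos.mp (by rw [Finset.card_erase_of_mem hw₁]; omega)
    obtain ⟨w₃, hw₃⟩ : ((W.erase w₁).erase w₂).Nonempty := by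
      apply Finset.card_pos.mp
      rw [Finset.card_erase_of_mem hw₂, Finset.card_erase_of_mem hw₁]; omega
    obtain ⟨hne21, hw₂W⟩ := Finset.mem_erase.mp hw₂
    obtain ⟨hne32, hw₃'⟩ := Finset.mem_erase.mp hw₃
    obtain ⟨hne31, hw₃W⟩ := Finset.mem_erase.mp hw₃'
    have hcard : ∀ w ∈ W, (W.erase w).card = n := by
      intro w hw; rw [Finset.card_erase_of_mem hw]; omega
    have hsub : ∀ w : V, ((W.erase w : Finset V) : Set V) ⊆ (W : Set V) :=
      fun w => Finset.coe_subset.mpr (Finset.erase_subset _ _)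
    obtain ⟨f₁, hf₁W, hp₁⟩ := ih (W.erase w₁) (hcard w₁ hw₁) v f (mono _ _ _ (hsub w₁) hf)
    obtain ⟨f₂, hf₂W, hp₂⟩ := ih (W.erase w₂) (hcard w₂ hw₂W) v f (mono _ _ _ (hsub w₂) hf)
    obtain ⟨f₃, hf₃W, hp₃⟩ := ih (W.erase w₃) (hcard w₃ hw₃W) v f (mono _ _ _ (hsub w₃) hf)
    have htwo : ∀ w ∈ W,
        (f₁ w = f w ∧ f₂ w = f w) ∨ (f₁ w = f w ∧ f₃ w = f w) ∨
        (f₂ w = f w ∧ f₃ w = f w) := by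
      intro w hw
      by_cases h1 : w = w₁
      · subst h1
        exact Or.inr (Or.inr ⟨hf₂W _ (Finset.mem_erase.mpr ⟨fun h => hne21 h.symm, hw⟩),
          hf₃W _ (Finset.mem_erase.mpr ⟨fun h => hne31 h.symm, hw⟩)⟩)
      · by_cases h2 : w = w₂
        · subst h2
          exact Or.inr (Or.inl ⟨hf₁W _ (Finset.mem_erase.mpr ⟨h1, hw⟩),
            hf₃W _ (Finset.mem_erase.mpr ⟨fun h => hne32 h.symm, hw⟩)⟩)
        · exact Or.inl ⟨hf₁W _ (Finset.mem_erase.mpr ⟨h1, hw⟩),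
            hf₂W _ (Finset.mem_erase.mpr ⟨h2, hw⟩)⟩
    refine ⟨fun x => maj (f₁ x) (f₂ x) (f₃ x), ?_, ?_⟩
    · intro w hw
      exact key _ _ _ _ (htwo w hw)
    · intro c hc
      obtain ⟨t₁, ht₁, ha₁⟩ := hp₁ c hc
      obtain ⟨t₂, ht₂, ha₂⟩ := hp₂ c hc
      obtain ⟨t₃, ht₃, ha₃⟩ := hp₃ c hc
      refine ⟨_, hpres c hc t₁ ht₁ t₂ ht₂ t₃ ht₃, ?_⟩
      intro i hi
      rcases hi with hx | hx
      · have hxW : c.2.2 i ∈ W := hx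
        have hfx : maj (f₁ (c.2.2 i)) (f₂ (c.2.2 i)) (f₃ (c.2.2 i)) = f (c.2.2 i) :=
          key _ _ _ _ (htwo _ hxW)
        show maj (t₁ i) (t₂ i) (t₃ i) = maj (f₁ (c.2.2 i)) (f₂ (c.2.2 i)) (f₃ (c.2.2 i))
        rw [hfx]
        have agree : ∀ (w : V) (fj : V → D) (tj : Fin c.1 → D),
            (∀ x ∈ W.erase w, fj x = f x) →
            (∀ j, c.2.2 j ∈ ((W.erase w : Finset V) : Set V) ∪ {v} → tj j = fj (c.2.2 j)) →
            c.2.2 i ≠ w → tj i = f (c.2.2 i) := by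
          intro w fj tj hfW hag hne
          have hmem : c.2.2 i ∈ W.erase w := Finset.mem_erase.mpr ⟨hne, hxW⟩
          rw [hag i (Or.inl hmem)]
          exact hfW _ hmem
        by_cases h1 : c.2.2 i = w₁
        · refine key _ _ _ _ (Or.inr (Or.inr ⟨?_, ?_⟩))
          · exact agree w₂ f₂ t₂ hf₂W ha₂ (h1 ▸ fun h => hne21 h.symm)
          · exact agree w₃ f₃ t₃ hf₃W ha₃ (h1 ▸ fun h => hne31 h.symm)
        · by_cases h2 : c.2.2 i = w₂
          · refine key _ _ _ _ (Or.inr (Or.inl ⟨?_, ?_⟩))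
            · exact agree w₁ f₁ t₁ hf₁W ha₁ h1
            · exact agree w₃ f₃ t₃ hf₃W ha₃ (h2 ▸ fun h => hne32 h.symm)
          · exact key _ _ _ _ (Or.inl ⟨agree w₁ f₁ t₁ hf₁W ha₁ h1,
              agree w₂ f₂ t₂ hf₂W ha₂ h2⟩)
      · show maj (t₁ i) (t₂ i) (t₃ i) = maj (f₁ (c.2.2 i)) (f₂ (c.2.2 i)) (f₃ (c.2.2 i))
        rw [ha₁ i (Or.inr hx), ha₂ i (Or.inr hx), ha₃ i (Or.inr hx)]
end

section
/- (Spread expression) Let Γ be a constraint language over a finite domain D of size d. For every relation R of arity k that is few-definable from Γ (definable using Γ-constraints, equalities, conjunction, and both ∃ and ∀ quantifiers), there exists a pp-definable relation R' ⊆ D^(k+d) such that R is spread-expressed by R': (monotonicity) if {b₁,…,b_d} ⊇ {b'₁,…,b'_d} then R'(a,b₁,…,b_d) implies R'(a,b'₁,…,b'_d); and (expression) if {b₁,…,b_d} = D then R(a) ↔ R'(a,b₁,…,b_d). -/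
/-- Semantics of a quantifier prefix: `quantSem m Q P` quantifies the `m`
variables of `P` in order, universally where `Q` is `true` and existentially
where `Q` is `false`. -/
def quantSem {D : Type*} : (m : ℕ) → (Fin m → Bool) → ((Fin m → D) → Prop) → Prop
  | 0, _, P => P (fun i => i.elim0)
  | m + 1, Q, P =>
      if Q 0 = true then
        ∀ x : D, quantSem m (fun i => Q i.succ) (fun b => P (Fin.cons x b))
      else
        ∃ x : D, quantSem m (fun i => Q i.succ) (fun b => P (Fin.cons x b))

/-- `R` is few-definable from `Γ`: `R(v₁,…,v_k) ≡ Q₁x₁…Q_mx_m 𝒞` where each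
`Q_i ∈ {∀, ∃}` and `𝒞` is a finite conjunction of constraints over relations of
`Γ` and equalities. -/
def fewDefinable {D : Type*} (Γ : Set ((l : ℕ) × Set (Fin l → D))) {k : ℕ}
    (R : Set (Fin k → D)) : Prop :=
  ∃ (m : ℕ) (Q : Fin m → Bool) (C : List (Atom D k m)),
    (∀ A ∈ C, Atom.OverLang Γ A) ∧
    R = {a | quantSem m Q (fun b => ∀ A ∈ C, A.Sat a b)}

/-!
A universally quantified variable cannot be eliminated by a pp-formula, but it can be
replaced by finitely many instances once the `d` extra arguments `b₁, …, b_d` are known to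
list all of `D`: `∀ x, φ(a, x)` becomes `⋀ᵢ φ(a, bᵢ)`. Quantifiers are eliminated from the
innermost outwards, each inner spread expression being instantiated with the same extra
arguments `b`. Existential quantifiers are kept, so the result is pp-definable; it is
monotone in the set `{b₁, …, b_d}` because every conjunct is, and shrinking that set only
drops conjuncts.
-/

theorem Fin.comp_append {α β : Sort*} {m n : ℕ} (g : α → β) (u : Fin m → α) (v : Fin n → α) :
    g ∘ Fin.append u v = Fin.append (g ∘ u) (g ∘ v) := by
  funext i
  induction i using Fin.addCases <;> simp

@[simp]
theorem Fin.append_comp_castAdd {α : Sort*} {m n : ℕ} (u : Fin m → α) (v : Fin n → α) :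
    Fin.append u v ∘ Fin.castAdd n = u :=
  funext (Fin.append_left u v)

@[simp]
theorem Fin.append_comp_natAdd {α : Sort*} {m n : ℕ} (u : Fin m → α) (v : Fin n → α) :
    Fin.append u v ∘ Fin.natAdd m = v :=
  funext (Fin.append_right u v)

section

variable {D : Type*} {Γ : Set ((l : ℕ) × Set (Fin l → D))}

namespace Atom

def map {k m k' m' : ℕ} (ρ : Fin k ⊕ Fin m → Fin k' ⊕ Fin m') : Atom D k m → Atom D k' m'
  | .rel l S vars => .rel l S (ρ ∘ vars)
  | .eq u v => .eq (ρ u) (ρ v)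

theorem OverLang.map {k m k' m' : ℕ} {A : Atom D k m} (h : A.OverLang Γ)
    (ρ : Fin k ⊕ Fin m → Fin k' ⊕ Fin m') : (A.map ρ).OverLang Γ := by
  cases A <;> exact h

theorem sat_map {k m k' m' : ℕ} (ρ : Fin k ⊕ Fin m → Fin k' ⊕ Fin m') (A : Atom D k m)
    (a : Fin k' → D) (b : Fin m' → D) :
    (A.map ρ).Sat a b ↔
      A.Sat (fun i => Sum.elim a b (ρ (.inl i))) (fun j => Sum.elim a b (ρ (.inr j))) := by
  have hsplit : ∀ v, Sum.elim (fun i => Sum.elim a b (ρ (.inl i)))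
      (fun j => Sum.elim a b (ρ (.inr j))) v = Sum.elim a b (ρ v) := by
    rintro (i | j) <;> rfl
  cases A <;> simp only [map, Sat, Function.comp_apply, hsplit]

end Atom

theorem ppDefinable_map {k m k' m' : ℕ} {C : List (Atom D k m)} (hC : ∀ A ∈ C, A.OverLang Γ)
    (ρ : Fin k ⊕ Fin m → Fin k' ⊕ Fin m') :
    ppDefinable Γ {a : Fin k' → D | ∃ b : Fin m' → D, ∀ A ∈ C,
      A.Sat (fun i => Sum.elim a b (ρ (.inl i))) (fun j => Sum.elim a b (ρ (.inr j)))} := by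
  refine ⟨m', C.map (Atom.map ρ), ?_, ?_⟩
  · simpa only [List.forall_mem_map] using fun A hA => (hC A hA).map ρ
  · simp only [List.forall_mem_map, Atom.sat_map]

theorem ppDefinable_univ {k : ℕ} : ppDefinable Γ (Set.univ : Set (Fin k → D)) :=
  ⟨0, [], by simp, by simp⟩

theorem ppDefinable.preimage_comp {k k' : ℕ} {R : Set (Fin k → D)} (h : ppDefinable Γ R)
    (σ : Fin k → Fin k') : ppDefinable Γ ((· ∘ σ) ⁻¹' R) := by
  obtain ⟨m, C, hC, rfl⟩ := h
  exact ppDefinable_map hC (Sum.map σ id)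

theorem ppDefinable.exists_snoc {k : ℕ} {R : Set (Fin (k + 1) → D)} (h : ppDefinable Γ R) :
    ppDefinable Γ {a : Fin k → D | ∃ x, Fin.snoc a x ∈ R} := by
  obtain ⟨m, C, hC, rfl⟩ := h
  -- the new bound variable is the first one, the old ones are shifted by one
  convert ppDefinable_map hC
    (Sum.elim (Fin.snoc (α := fun _ => Fin k ⊕ Fin (m + 1)) Sum.inl (Sum.inr 0))
      (Sum.inr ∘ Fin.succ)) using 1
  ext a
  have hfree : ∀ x (b : Fin m → D), (fun i => Sum.elim a (Fin.cons x b)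
      (Fin.snoc (α := fun _ => Fin k ⊕ Fin (m + 1)) Sum.inl (Sum.inr 0) i)) = Fin.snoc a x := by
    intro x b
    funext i
    induction i using Fin.lastCases <;> simp
  simp [Fin.exists_fin_succ_pi, hfree]

theorem ppDefinable.inter {k : ℕ} {R₁ R₂ : Set (Fin k → D)} (h₁ : ppDefinable Γ R₁)
    (h₂ : ppDefinable Γ R₂) : ppDefinable Γ (R₁ ∩ R₂) := by
  obtain ⟨m₁, C₁, hC₁, rfl⟩ := h₁
  obtain ⟨m₂, C₂, hC₂, rfl⟩ := h₂
  refine ⟨m₁ + m₂, C₁.map (Atom.map (Sum.map id (Fin.castAdd m₂))) ++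
    C₂.map (Atom.map (Sum.map id (Fin.natAdd m₁))), ?_, ?_⟩
  · simp only [List.forall_mem_append, List.forall_mem_map]
    exact ⟨fun A hA => (hC₁ A hA).map _, fun A hA => (hC₂ A hA).map _⟩
  · ext a
    simp only [Set.mem_inter_iff, Set.mem_ofPred_eq, List.forall_mem_append,
      List.forall_mem_map, Atom.sat_map]
    constructor
    · rintro ⟨⟨b₁, h₁⟩, b₂, h₂⟩
      exact ⟨Fin.append b₁ b₂, by simpa using h₁, by simpa using h₂⟩
    · rintro ⟨b, h₁, h₂⟩
      exact ⟨⟨_, h₁⟩, _, h₂⟩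

theorem ppDefinable_iInter {k : ℕ} {ι : Type*} [Finite ι] {R : ι → Set (Fin k → D)}
    (h : ∀ i, ppDefinable Γ (R i)) : ppDefinable Γ (⋂ i, R i) := by
  classical
  cases nonempty_fintype ι
  have hfin : ∀ s : Finset ι, ppDefinable Γ (⋂ i ∈ s, R i) := by
    intro s
    induction s using Finset.induction_on with
    | empty => simpa using ppDefinable_univ
    | insert i s _ ih => simpa [Finset.set_biInter_insert] using (h i).inter ih
  simpa using hfin Finset.univ

theorem ppDefinable_setOf_forall_sat {k m : ℕ} {C : List (Atom D k m)}
    (hC : ∀ A ∈ C, A.OverLang Γ) :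
    ppDefinable Γ {c : Fin (k + m) → D |
      ∀ A ∈ C, A.Sat (fun i => c (Fin.castAdd m i)) (fun j => c (Fin.natAdd k j))} := by
  simpa using ppDefinable_map (m' := 0) hC
    (Sum.elim (Sum.inl ∘ Fin.castAdd m) (Sum.inl ∘ Fin.natAdd k))

structure SpreadExpresses {k n : ℕ} (R' : Set (Fin (k + n) → D)) (R : Set (Fin k → D)) :
    Prop where
  mono : ∀ (a : Fin k → D) (b b' : Fin n → D),
    Set.range b' ⊆ Set.range b → Fin.append a b ∈ R' → Fin.append a b' ∈ R'
  mem_iff : ∀ (a : Fin k → D) (b : Fin n → D),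
    Set.range b = Set.univ → (a ∈ R ↔ Fin.append a b ∈ R')

theorem spreadExpresses_preimage_castAdd {k : ℕ} (n : ℕ) (R : Set (Fin k → D)) :
    SpreadExpresses ((· ∘ Fin.castAdd n) ⁻¹' R) R where
  mono a b b' _ := by simp
  mem_iff a b _ := by simp

section Quantifiers

variable {k n : ℕ}

/- `spreadForall R' (a, b) = ⋀ᵢ R'(a, bᵢ, b)` and `spreadExists R' (a, b) = ∃ x, R'(a, x, b)`,
written as preimages under reindexings so that pp-definability is immediate. -/
def spreadForall (R' : Set (Fin (k + 1 + n) → D)) : Set (Fin (k + n) → D) :=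
  ⋂ i : Fin n, (· ∘ Fin.append (Fin.snoc (α := fun _ => Fin (k + n)) (Fin.castAdd n)
    (Fin.natAdd k i)) (Fin.natAdd k)) ⁻¹' R'

def spreadExists (R' : Set (Fin (k + 1 + n) → D)) : Set (Fin (k + n) → D) :=
  {c | ∃ x, Fin.snoc c x ∈ (· ∘ Fin.append (Fin.snoc (α := fun _ => Fin (k + n + 1))
    (Fin.castSucc ∘ Fin.castAdd n) (Fin.last _)) (Fin.castSucc ∘ Fin.natAdd k)) ⁻¹' R'}

theorem append_mem_spreadForall {R' : Set (Fin (k + 1 + n) → D)} {a : Fin k → D}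
    {b : Fin n → D} :
    Fin.append a b ∈ spreadForall R' ↔ ∀ i, Fin.append (Fin.snoc a (b i)) b ∈ R' := by
  simp [spreadForall, Fin.comp_append, Fin.comp_snoc]

theorem append_mem_spreadExists {R' : Set (Fin (k + 1 + n) → D)} {a : Fin k → D}
    {b : Fin n → D} :
    Fin.append a b ∈ spreadExists R' ↔ ∃ x, Fin.append (Fin.snoc a x) b ∈ R' := by
  simp [spreadExists, Fin.comp_append, Fin.comp_snoc, ← Function.comp_assoc]

theorem ppDefinable.spreadForall {R' : Set (Fin (k + 1 + n) → D)} (h : ppDefinable Γ R') :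
    ppDefinable Γ (spreadForall R') :=
  ppDefinable_iInter fun _ => h.preimage_comp _

theorem ppDefinable.spreadExists {R' : Set (Fin (k + 1 + n) → D)} (h : ppDefinable Γ R') :
    ppDefinable Γ (spreadExists R') :=
  (h.preimage_comp _).exists_snoc

theorem SpreadExpresses.spreadForall {R' : Set (Fin (k + 1 + n) → D)}
    {S : Set (Fin (k + 1) → D)} (h : SpreadExpresses R' S) :
    SpreadExpresses (spreadForall R') {a | ∀ x, Fin.snoc a x ∈ S} where
  mono a b b' hb hab := by
    rw [append_mem_spreadForall] at hab ⊢
    intro i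
    obtain ⟨j, hj⟩ := hb ⟨i, rfl⟩
    simpa [hj] using h.mono _ b b' hb (hab j)
  mem_iff a b hb := by
    rw [append_mem_spreadForall, Set.mem_ofPred_eq, (Set.range_eq_univ.mp hb).forall]
    exact forall_congr' fun i => h.mem_iff _ b hb

theorem SpreadExpresses.spreadExists {R' : Set (Fin (k + 1 + n) → D)}
    {S : Set (Fin (k + 1) → D)} (h : SpreadExpresses R' S) :
    SpreadExpresses (spreadExists R') {a | ∃ x, Fin.snoc a x ∈ S} where
  mono a b b' hb hab := by
    rw [append_mem_spreadExists] at hab ⊢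
    obtain ⟨x, hx⟩ := hab
    exact ⟨x, h.mono _ b b' hb hx⟩
  mem_iff a b hb := by
    rw [append_mem_spreadExists]
    exact exists_congr fun x => h.mem_iff _ b hb

end Quantifiers

theorem exists_spreadExpresses_quantSem (n : ℕ) :
    ∀ {k m : ℕ} (Q : Fin m → Bool) {M : Set (Fin (k + m) → D)}, ppDefinable Γ M →
      ∃ R' : Set (Fin (k + n) → D), ppDefinable Γ R' ∧
        SpreadExpresses R' {a | quantSem m Q fun b => Fin.append a b ∈ M}
  | k, 0, Q, M, hM => by
    have hR : {a | quantSem 0 Q fun b => Fin.append a b ∈ M} =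
        (· ∘ Fin.cast (Nat.add_zero k).symm) ⁻¹' M := by
      ext a
      simp [quantSem]
    rw [hR]
    exact ⟨_, (hM.preimage_comp _).preimage_comp _, spreadExpresses_preimage_castAdd n _⟩
  | k, m + 1, Q, M, hM => by
    set S := {a' | quantSem m (fun i => Q i.succ)
      fun b => Fin.append a' b ∈ (· ∘ Fin.cast (Nat.succ_add_eq_add_succ k m).symm) ⁻¹' M}
    obtain ⟨R', hR'pp, hR'⟩ :=
      exists_spreadExpresses_quantSem n (fun i => Q i.succ) (hM.preimage_comp _)
    -- the outermost quantified variable becomes the last free variable of `S`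
    have hR : {a | quantSem (m + 1) Q fun b => Fin.append a b ∈ M} =
        if Q 0 then {a | ∀ x, Fin.snoc a x ∈ S} else {a | ∃ x, Fin.snoc a x ∈ S} := by
      ext a
      split <;> simp [S, quantSem, *, Fin.append_right_cons]
    rw [hR]
    split
    · exact ⟨_, hR'pp.spreadForall, hR'.spreadForall⟩
    · exact ⟨_, hR'pp.spreadExists, hR'.spreadExists⟩

end

theorem spread_expression_general {D : Type*} [Fintype D]
    (Γ : Set ((l : ℕ) × Set (Fin l → D))) {k : ℕ} (R : Set (Fin k → D))
    (hR : fewDefinable Γ R) :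
    ∃ R' : Set (Fin (k + Fintype.card D) → D),
      ppDefinable Γ R' ∧
      (∀ (a : Fin k → D) (b b' : Fin (Fintype.card D) → D),
        Set.range b' ⊆ Set.range b →
        Fin.append a b ∈ R' → Fin.append a b' ∈ R') ∧
      (∀ (a : Fin k → D) (b : Fin (Fintype.card D) → D),
        Set.range b = Set.univ → (a ∈ R ↔ Fin.append a b ∈ R')) := by
  obtain ⟨m, Q, C, hC, rfl⟩ := hR
  obtain ⟨R', hR'pp, hR'⟩ :=
    exists_spreadExpresses_quantSem (Fintype.card D) Q (ppDefinable_setOf_forall_sat hC)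
  refine ⟨R', hR'pp, hR'.mono, fun a b hb => ?_⟩
  simpa using hR'.mem_iff a b hb

/-- (Spread expression) Let `Γ` be a constraint language over a finite
nonempty domain `D` of size `d`.  For every `k`-ary relation `R` few-definable
from `Γ` there is a pp-definable relation `R' ⊆ D^(k+d)` spread-expressing `R`:
(monotonicity) if the set of values `{b'₁,…,b'_d}` is contained in
`{b₁,…,b_d}`, then `R'(a, b₁,…,b_d)` implies `R'(a, b'₁,…,b'_d)`; and
(expression) if `{b₁,…,b_d} = D`, then `R(a) ↔ R'(a, b₁,…,b_d)`. -/
theorem spread_expression {D : Type*} [Fintype D] [Nonempty D]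
    (Γ : Set ((l : ℕ) × Set (Fin l → D))) {k : ℕ} (R : Set (Fin k → D))
    (hR : fewDefinable Γ R) :
    ∃ R' : Set (Fin (k + Fintype.card D) → D),
      ppDefinable Γ R' ∧
      (∀ (a : Fin k → D) (b b' : Fin (Fintype.card D) → D),
        Set.range b' ⊆ Set.range b →
        Fin.append a b ∈ R' → Fin.append a b' ∈ R') ∧
      (∀ (a : Fin k → D) (b : Fin (Fintype.card D) → D),
        Set.range b = Set.univ → (a ∈ R ↔ Fin.append a b ∈ R')) :=
  spread_expression_general Γ R hR
end
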